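/- arXiv:2508.21312 — 8 statements merged into one kernel-verified Lean document; each statement's English description precedes it below -/
import Mathlib

section
/- Let M be a discrete valuation field and ν_{i,j} (1 ≤ i < j ≤ n) rationals with ν_{i,j} ≥ ν_{i,l} + ν_{l,j} for i < l < j. Then H_{<ν} = {X ∈ UT_n(M) : v_M(x_{i,j}) > -ν_{i,j} for all i < j} is a normal subgroup of H_{≤ν} = {X ∈ UT_n(M) : v_M(x_{i,j}) ≥ -ν_{i,j} for all i < j}. -/
/-!
Write `X = 1 + A`. Then `X ∈ H_{≤ν}` (resp. `H_{<ν}`) says that `A` is strictly upper triangular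
with `v(A i j) ≥ -ν i j` (resp. `>`). The entries of a product `A B` are sums of terms
`A i l * B l j` with `i < l < j`, so superadditivity of `ν` gives the same bounds for `A B`,
strict as soon as they are strict for one factor: the strict matrices form a two-sided ideal of
the non-unital ring of the non-strict ones. The group axioms and normality then follow from
`(1 + a)(1 + b) = 1 + (a + b + a b)`, `(1 + a)⁻¹ = ∑ₖ (-a)ᵏ` for the nilpotent `a`, and
`x y x⁻¹ - 1 = x (y - 1) x⁻¹`.
-/

/-- The valuation of an element, viewed with rational values. -/
noncomputable def vQ {M : Type*} [Field M] (v : AddValuation M (WithTop ℤ)) (x : M) :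
    WithTop ℚ :=
  WithTop.map (fun z : ℤ => (z : ℚ)) (v x)

/-- Unipotent upper triangular matrix. -/
def IsUnitri {n : ℕ} {M : Type*} [Field M] (X : Matrix (Fin n) (Fin n) M) : Prop :=
  (∀ i j : Fin n, j < i → X i j = 0) ∧ ∀ i : Fin n, X i i = 1

/-- Membership in `H_{≤ν}`. -/
def MemHle {n : ℕ} {M : Type*} [Field M] (v : AddValuation M (WithTop ℤ))
    (ν : Fin n → Fin n → ℚ) (X : Matrix (Fin n) (Fin n) M) : Prop :=
  IsUnitri X ∧ ∀ i j : Fin n, i < j → ((-ν i j : ℚ) : WithTop ℚ) ≤ vQ v (X i j)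

/-- Membership in `H_{<ν}` (strict inequalities). -/
def MemHlt {n : ℕ} {M : Type*} [Field M] (v : AddValuation M (WithTop ℤ))
    (ν : Fin n → Fin n → ℚ) (X : Matrix (Fin n) (Fin n) M) : Prop :=
  IsUnitri X ∧ ∀ i j : Fin n, i < j → ((-ν i j : ℚ) : WithTop ℚ) < vQ v (X i j)

open Finset

namespace NonUnitalSubring

variable {A : Type*} [Ring A] {S T : NonUnitalSubring A} {x x' y : A}

theorem mul_sub_one_mem (hx : x - 1 ∈ S) (hy : y - 1 ∈ S) : x * y - 1 ∈ S := by
  have h : x * y - 1 = (x - 1) * (y - 1) + (x - 1) + (y - 1) := by noncomm_ring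
  rw [h]
  exact add_mem (add_mem (mul_mem hx hy) hx) hy

theorem exists_mul_eq_one_of_isNilpotent (hx : x - 1 ∈ S) (hnil : IsNilpotent (x - 1)) :
    ∃ y, x * y = 1 ∧ y - 1 ∈ S := by
  obtain ⟨m, hm⟩ := hnil
  have hpow : ∀ k, (-(x - 1)) ^ (k + 1) ∈ S := by
    intro k
    induction k with
    | zero => simpa using neg_mem hx
    | succ k ih => rw [pow_succ]; exact mul_mem ih (neg_mem hx)
  refine ⟨∑ i ∈ range (m + 1), (-(x - 1)) ^ i, ?_, ?_⟩
  · have h := mul_neg_geom_sum (-(x - 1)) (m + 1)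
    rwa [sub_neg_eq_add, add_sub_cancel, neg_pow, pow_succ (x - 1), hm, zero_mul, mul_zero,
      sub_zero] at h
  · rw [sum_range_succ', pow_zero, add_sub_cancel_right]
    exact sum_mem fun k _ => hpow k

theorem mul_mem_of_sub_one_mem (hTS : ∀ a ∈ T, ∀ b ∈ S, a * b ∈ S) (hx : x - 1 ∈ T)
    {b : A} (hb : b ∈ S) : x * b ∈ S := by
  have h : x * b = b + (x - 1) * b := by noncomm_ring
  rw [h]
  exact add_mem hb (hTS _ hx _ hb)

theorem conj_sub_one_mem (hTS : ∀ a ∈ T, ∀ b ∈ S, a * b ∈ S)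
    (hST : ∀ b ∈ S, ∀ a ∈ T, b * a ∈ S) (hx : x - 1 ∈ T) (hx' : x' - 1 ∈ T)
    (hxx' : x * x' = 1) (hy : y - 1 ∈ S) : x * y * x' - 1 ∈ S := by
  have h : x * y * x' - 1 = x * (y - 1) + x * (y - 1) * (x' - 1) :=
    calc x * y * x' - 1 = x * y * x' - x * x' := by rw [hxx']
      _ = _ := by noncomm_ring
  have hxy : x * (y - 1) ∈ S := mul_mem_of_sub_one_mem hTS hx hy
  rw [h]
  exact add_mem hxy (hST _ hxy _ hx')

end NonUnitalSubring

theorem WithTop.coe_neg_le_add_of_add_le {Γ : Type*} [AddCommGroup Γ] [LinearOrder Γ]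
    [IsOrderedAddMonoid Γ] {a b c : Γ} (h : a + b ≤ c) :
    ((-c : Γ) : WithTop Γ) ≤ ((-a : Γ) : WithTop Γ) + ((-b : Γ) : WithTop Γ) := by
  rw [← WithTop.coe_add, WithTop.coe_le_coe, ← neg_add]
  exact neg_le_neg h

namespace Matrix

variable {ι R : Type*} [LinearOrder ι]

theorem mul_eq_zero_of_not_between [MulZeroClass R] {A B : Matrix ι ι R}
    (hA : ∀ i j, j ≤ i → A i j = 0) (hB : ∀ i j, j ≤ i → B i j = 0) {i l j : ι}
    (h : ¬(i < l ∧ l < j)) : A i l * B l j = 0 := by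
  rcases not_and_or.1 h with h | h
  · rw [hA i l (not_lt.1 h), zero_mul]
  · rw [hB l j (not_lt.1 h), mul_zero]

variable [Fintype ι]

theorem mul_apply_eq_zero_of_le [NonUnitalNonAssocSemiring R] {A B : Matrix ι ι R}
    (hA : ∀ i j, j ≤ i → A i j = 0) (hB : ∀ i j, j ≤ i → B i j = 0) {i j : ι} (hji : j ≤ i) :
    (A * B) i j = 0 :=
  Finset.sum_eq_zero fun _ _ =>
    mul_eq_zero_of_not_between hA hB fun h => (h.1.trans h.2).not_ge hji

theorem isNilpotent_of_forall_le_eq_zero [CommRing R] {A : Matrix ι ι R}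
    (hA : ∀ i j, j ≤ i → A i j = 0) : IsNilpotent A := by
  have hchar : A.charpoly = Polynomial.X ^ Fintype.card ι := by
    rw [charpoly_of_isUpperTriangular A fun i j hji => hA i j hji.le]
    simp [hA _ _ le_rfl]
  exact ⟨Fintype.card ι, by simpa [hchar] using A.aeval_self_charpoly⟩

theorem inv_sub_one_mem_of_isNilpotent [CommRing R] {U : NonUnitalSubring (Matrix ι ι R)}
    {X : Matrix ι ι R} (hX : X - 1 ∈ U) (hnil : IsNilpotent (X - 1)) :
    X * X⁻¹ = 1 ∧ X⁻¹ - 1 ∈ U := by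
  obtain ⟨Y, hXY, hY⟩ := U.exists_mul_eq_one_of_isNilpotent hX hnil
  rw [inv_eq_right_inv hXY]
  exact ⟨hXY, hY⟩

section Valuation

variable [Ring R] {Γ : Type*} [AddCommGroup Γ] [LinearOrder Γ] [IsOrderedAddMonoid Γ]
  (w : AddValuation R (WithTop Γ)) {ν : ι → ι → Γ}
  (hν : ∀ i l j, i < l → l < j → ν i l + ν l j ≤ ν i j)

section Product

variable {A B : Matrix ι ι R} (hA0 : ∀ i j, j ≤ i → A i j = 0) (hB0 : ∀ i j, j ≤ i → B i j = 0)
include hν hA0 hB0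

theorem coe_le_val_mul_apply (hA : ∀ i j, i < j → ((-ν i j : Γ) : WithTop Γ) ≤ w (A i j))
    (hB : ∀ i j, i < j → ((-ν i j : Γ) : WithTop Γ) ≤ w (B i j)) (i j : ι) :
    ((-ν i j : Γ) : WithTop Γ) ≤ w ((A * B) i j) := by
  refine w.map_le_sum fun l _ => ?_
  by_cases hl : i < l ∧ l < j
  · rw [w.map_mul]
    exact (WithTop.coe_neg_le_add_of_add_le (hν i l j hl.1 hl.2)).trans
      (add_le_add (hA i l hl.1) (hB l j hl.2))
  · rw [mul_eq_zero_of_not_between hA0 hB0 hl, w.map_zero]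
    exact le_top

theorem coe_lt_val_mul_apply_of_le_of_lt
    (hA : ∀ i j, i < j → ((-ν i j : Γ) : WithTop Γ) ≤ w (A i j))
    (hB : ∀ i j, i < j → ((-ν i j : Γ) : WithTop Γ) < w (B i j)) (i j : ι) :
    ((-ν i j : Γ) : WithTop Γ) < w ((A * B) i j) := by
  refine w.map_lt_sum WithTop.coe_ne_top fun l _ => ?_
  by_cases hl : i < l ∧ l < j
  · rw [w.map_mul]
    exact (WithTop.coe_neg_le_add_of_add_le (hν i l j hl.1 hl.2)).trans_lt
      (WithTop.add_lt_add_of_le_of_lt WithTop.coe_ne_top (hA i l hl.1) (hB l j hl.2))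
  · rw [mul_eq_zero_of_not_between hA0 hB0 hl, w.map_zero]
    exact WithTop.coe_lt_top _

theorem coe_lt_val_mul_apply_of_lt_of_le
    (hA : ∀ i j, i < j → ((-ν i j : Γ) : WithTop Γ) < w (A i j))
    (hB : ∀ i j, i < j → ((-ν i j : Γ) : WithTop Γ) ≤ w (B i j)) (i j : ι) :
    ((-ν i j : Γ) : WithTop Γ) < w ((A * B) i j) := by
  refine w.map_lt_sum WithTop.coe_ne_top fun l _ => ?_
  by_cases hl : i < l ∧ l < j
  · rw [w.map_mul]
    exact (WithTop.coe_neg_le_add_of_add_le (hν i l j hl.1 hl.2)).trans_lt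
      (WithTop.add_lt_add_of_lt_of_le WithTop.coe_ne_top (hA i l hl.1) (hB l j hl.2))
  · rw [mul_eq_zero_of_not_between hA0 hB0 hl, w.map_zero]
    exact WithTop.coe_lt_top _

end Product

def strictUpperLe : NonUnitalSubring (Matrix ι ι R) where
  carrier := {A | (∀ i j, j ≤ i → A i j = 0) ∧
    ∀ i j, i < j → ((-ν i j : Γ) : WithTop Γ) ≤ w (A i j)}
  zero_mem' := ⟨fun _ _ _ => rfl, fun _ _ _ => by simp⟩
  add_mem' := fun ⟨hA0, hA⟩ ⟨hB0, hB⟩ => ⟨fun i j h => by simp [hA0 i j h, hB0 i j h],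
    fun i j h => w.map_le_add (hA i j h) (hB i j h)⟩
  neg_mem' := fun ⟨hA0, hA⟩ => ⟨fun i j h => by simp [hA0 i j h],
    fun i j h => by simpa using hA i j h⟩
  mul_mem' := fun ⟨hA0, hA⟩ ⟨hB0, hB⟩ => ⟨fun _ _ h => mul_apply_eq_zero_of_le hA0 hB0 h,
    fun i j _ => coe_le_val_mul_apply w hν hA0 hB0 hA hB i j⟩

def strictUpperLt : NonUnitalSubring (Matrix ι ι R) where
  carrier := {A | (∀ i j, j ≤ i → A i j = 0) ∧
    ∀ i j, i < j → ((-ν i j : Γ) : WithTop Γ) < w (A i j)}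
  zero_mem' := ⟨fun _ _ _ => rfl, fun _ _ _ => by
    rw [zero_apply, w.map_zero]; exact WithTop.coe_lt_top _⟩
  add_mem' := fun ⟨hA0, hA⟩ ⟨hB0, hB⟩ => ⟨fun i j h => by simp [hA0 i j h, hB0 i j h],
    fun i j h => w.map_lt_add (hA i j h) (hB i j h)⟩
  neg_mem' := fun ⟨hA0, hA⟩ => ⟨fun i j h => by simp [hA0 i j h],
    fun i j h => by simpa using hA i j h⟩
  mul_mem' := fun ⟨hA0, hA⟩ ⟨hB0, hB⟩ => ⟨fun _ _ h => mul_apply_eq_zero_of_le hA0 hB0 h,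
    fun i j _ =>
      coe_lt_val_mul_apply_of_le_of_lt w hν hA0 hB0 (fun i j h => (hA i j h).le) hB i j⟩

variable {w hν} {A B : Matrix ι ι R}

theorem strictUpperLt_le_strictUpperLe : strictUpperLt w hν ≤ strictUpperLe w hν :=
  fun _ ⟨hA0, hA⟩ => ⟨hA0, fun i j h => (hA i j h).le⟩

theorem mul_mem_strictUpperLt_of_le_of_lt (hA : A ∈ strictUpperLe w hν)
    (hB : B ∈ strictUpperLt w hν) : A * B ∈ strictUpperLt w hν :=
  ⟨fun _ _ h => mul_apply_eq_zero_of_le hA.1 hB.1 h,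
    fun i j _ => coe_lt_val_mul_apply_of_le_of_lt w hν hA.1 hB.1 hA.2 hB.2 i j⟩

theorem mul_mem_strictUpperLt_of_lt_of_le (hA : A ∈ strictUpperLt w hν)
    (hB : B ∈ strictUpperLe w hν) : A * B ∈ strictUpperLt w hν :=
  ⟨fun _ _ h => mul_apply_eq_zero_of_le hA.1 hB.1 h,
    fun i j _ => coe_lt_val_mul_apply_of_lt_of_le w hν hA.1 hB.1 hA.2 hB.2 i j⟩

end Valuation

end Matrix

section Unitriangular

variable {n : ℕ} {M : Type*} [Field M] (v : AddValuation M (WithTop ℤ)) {ν : Fin n → Fin n → ℚ}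
  (hν : ∀ i l j : Fin n, i < l → l < j → ν i l + ν l j ≤ ν i j) {X : Matrix (Fin n) (Fin n) M}

def vQAddValuation : AddValuation M (WithTop ℚ) :=
  v.map (Int.castAddHom ℚ).withTopMap rfl Int.cast_mono.withTop_map

theorem vQAddValuation_apply (x : M) : vQAddValuation v x = vQ v x := rfl

theorem isUnitri_iff_sub_one : IsUnitri X ↔ ∀ i j, j ≤ i → (X - 1) i j = 0 := by
  refine ⟨fun ⟨h0, h1⟩ i j hji => ?_, fun h => ⟨fun i j hji => ?_, fun i => ?_⟩⟩
  · rcases hji.lt_or_eq with hji | rfl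
    · rw [Matrix.sub_apply, h0 i j hji, Matrix.one_apply_ne hji.ne', sub_zero]
    · rw [Matrix.sub_apply, h1, Matrix.one_apply_eq, sub_self]
  · simpa [Matrix.one_apply_ne hji.ne'] using h i j hji.le
  · simpa [sub_eq_zero] using h i i le_rfl

theorem memHle_iff_sub_one_mem :
    MemHle v ν X ↔ X - 1 ∈ Matrix.strictUpperLe (vQAddValuation v) hν := by
  refine and_congr isUnitri_iff_sub_one (forall₂_congr fun i j => forall_congr' fun hij => ?_)
  rw [Matrix.sub_apply, Matrix.one_apply_ne hij.ne, sub_zero, vQAddValuation_apply]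

theorem memHlt_iff_sub_one_mem :
    MemHlt v ν X ↔ X - 1 ∈ Matrix.strictUpperLt (vQAddValuation v) hν := by
  refine and_congr isUnitri_iff_sub_one (forall₂_congr fun i j => forall_congr' fun hij => ?_)
  rw [Matrix.sub_apply, Matrix.one_apply_ne hij.ne, sub_zero, vQAddValuation_apply]

end Unitriangular

open Matrix NonUnitalSubring in
/-- If `ν_{i,j} ≥ ν_{i,l} + ν_{l,j}` for `i < l < j`, then `H_{<ν}` is a
normal subgroup of `H_{≤ν}`: `H_{<ν} ⊆ H_{≤ν}`, `H_{<ν}` contains the identity, is closed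
under products and inverses, and is stable under conjugation by elements of `H_{≤ν}`. -/
theorem Hlt_normalSubgroup_of_Hle {n : ℕ} {M : Type*} [Field M]
    (v : AddValuation M (WithTop ℤ)) (ν : Fin n → Fin n → ℚ)
    (hν : ∀ i l j : Fin n, i < l → l < j → ν i l + ν l j ≤ ν i j) :
    (∀ X : Matrix (Fin n) (Fin n) M, MemHlt v ν X → MemHle v ν X) ∧
    MemHlt v ν (1 : Matrix (Fin n) (Fin n) M) ∧
    (∀ X Y : Matrix (Fin n) (Fin n) M, MemHlt v ν X → MemHlt v ν Y → MemHlt v ν (X * Y)) ∧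
    (∀ X : Matrix (Fin n) (Fin n) M, MemHlt v ν X → MemHlt v ν X⁻¹) ∧
    (∀ X Y : Matrix (Fin n) (Fin n) M, MemHle v ν X → MemHlt v ν Y →
      MemHlt v ν (X * Y * X⁻¹)) := by
  simp only [memHle_iff_sub_one_mem v hν, memHlt_iff_sub_one_mem v hν]
  refine ⟨fun X hX => strictUpperLt_le_strictUpperLe hX, by simp [zero_mem],
    fun X Y hX hY => mul_sub_one_mem hX hY,
    fun X hX => (inv_sub_one_mem_of_isNilpotent hX (isNilpotent_of_forall_le_eq_zero hX.1)).2,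
    fun X Y hX hY => ?_⟩
  obtain ⟨hXX', hX'⟩ := inv_sub_one_mem_of_isNilpotent hX (isNilpotent_of_forall_le_eq_zero hX.1)
  exact conj_sub_one_mem (fun _ ha _ hb => mul_mem_strictUpperLt_of_le_of_lt ha hb)
    (fun _ hb _ ha => mul_mem_strictUpperLt_of_lt_of_le hb ha) hX hX' hXX' hY
end

section
/- Let M be a discrete valuation field, ν_{i,j} rationals with ν_{i,j} ≥ ν_{i,l} + ν_{l,j} for i < l < j, X = (x_{i,j}) ∈ H_{≤ν} and Y ∈ H_{<ν}. Writing XY = (z_{i,j}) and YX = (z'_{i,j}), one has v_M(z_{i,j} - x_{i,j}) > -ν_{i,j} and v_M(z'_{i,j} - x_{i,j}) > -ν_{i,j} for all 1 ≤ i < j ≤ n. -/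
/-!
Expanding the product of two unitriangular matrices,
`(XY)_{ij} - x_{ij} = y_{ij} + ∑_{i<l<j} x_{il} y_{lj}`, and likewise for `YX`.
Here `v(y_{ij}) > -ν_{ij}` by hypothesis, and each middle term has valuation
`> -ν_{il} - ν_{lj} ≥ -ν_{ij}` by the superadditivity of `ν`; the ultrametric inequality
concludes.
-/

section Valuation

variable {M : Type*} [Field M] (v : AddValuation M (WithTop ℤ))

lemma vQ_mul (a b : M) : vQ v (a * b) = vQ v a + vQ v b := by
  rw [vQ, vQ, vQ, v.map_mul]
  cases v a using WithTop.recTopCoe <;> cases v b using WithTop.recTopCoe <;>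
    simp [← WithTop.coe_add]

lemma lt_vQ_add {a b : M} {c : WithTop ℚ} (ha : c < vQ v a) (hb : c < vQ v b) :
    c < vQ v (a + b) := by
  have hmono : Monotone (WithTop.map (fun z : ℤ => (z : ℚ))) := Int.cast_mono.withTop_map
  calc c < min (vQ v a) (vQ v b) := lt_min ha hb
    _ ≤ vQ v (a + b) := by
      rw [vQ, vQ, ← hmono.map_min]
      exact hmono (v.map_add a b)

lemma lt_vQ_sum {ι : Type*} {s : Finset ι} {f : ι → M} {c : ℚ}
    (h : ∀ t ∈ s, (c : WithTop ℚ) < vQ v (f t)) : (c : WithTop ℚ) < vQ v (∑ t ∈ s, f t) :=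
  Finset.sum_induction f (fun x => (c : WithTop ℚ) < vQ v x) (fun _ _ => lt_vQ_add v)
    (by simp [vQ]) h

lemma lt_vQ_mul_of_le_of_lt {a b : M} {p q r : ℚ} (hpq : p + q ≤ r)
    (ha : ((-p : ℚ) : WithTop ℚ) ≤ vQ v a) (hb : ((-q : ℚ) : WithTop ℚ) < vQ v b) :
    ((-r : ℚ) : WithTop ℚ) < vQ v (a * b) :=
  calc ((-r : ℚ) : WithTop ℚ) ≤ ((-p : ℚ) : WithTop ℚ) + ((-q : ℚ) : WithTop ℚ) := by
        rw [← WithTop.coe_add, WithTop.coe_le_coe]; linarith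
    _ < vQ v a + vQ v b := WithTop.add_lt_add_of_le_of_lt WithTop.coe_ne_top ha hb
    _ = vQ v (a * b) := (vQ_mul v a b).symm

lemma lt_vQ_mul_of_lt_of_le {a b : M} {p q r : ℚ} (hpq : p + q ≤ r)
    (ha : ((-p : ℚ) : WithTop ℚ) < vQ v a) (hb : ((-q : ℚ) : WithTop ℚ) ≤ vQ v b) :
    ((-r : ℚ) : WithTop ℚ) < vQ v (a * b) := by
  rw [mul_comm]
  exact lt_vQ_mul_of_le_of_lt v (by linarith) hb ha

end Valuation

lemma IsUnitri.mul_apply_of_lt {n : ℕ} {M : Type*} [Field M] {A B : Matrix (Fin n) (Fin n) M}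
    (hA : IsUnitri A) (hB : IsUnitri B) {i j : Fin n} (hij : i < j) :
    (A * B) i j = A i j + B i j + ∑ l ∈ Finset.Ioo i j, A i l * B l j := by
  have hsupp : ∑ l, A i l * B l j = ∑ l ∈ Finset.Icc i j, A i l * B l j := by
    refine (Finset.sum_subset (Finset.subset_univ _) fun l _ hl => ?_).symm
    rcases not_and_or.mp (Finset.mem_Icc.not.mp hl) with hil | hlj
    · rw [hA.1 i l (not_le.mp hil), zero_mul]
    · rw [hB.1 l j (not_le.mp hlj), mul_zero]
  rw [Matrix.mul_apply, hsupp, Finset.Icc_eq_cons_Ioc hij.le, Finset.sum_cons,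
    Finset.Ioc_eq_cons_Ioo hij, Finset.sum_cons, hA.2, hB.2, one_mul, mul_one,
    add_left_comm, add_assoc]

/-- For `X ∈ H_{≤ν}` and `Y ∈ H_{<ν}`, the entries of `XY` and of `YX`
agree with those of `X` modulo elements of valuation `> -ν_{i,j}`, i.e.
`v_M((XY)_{i,j} - x_{i,j}) > -ν_{i,j}` and `v_M((YX)_{i,j} - x_{i,j}) > -ν_{i,j}`. -/
theorem mul_entry_congr {n : ℕ} {M : Type*} [Field M]
    (v : AddValuation M (WithTop ℤ)) (ν : Fin n → Fin n → ℚ)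
    (hν : ∀ i l j : Fin n, i < l → l < j → ν i l + ν l j ≤ ν i j)
    (X Y : Matrix (Fin n) (Fin n) M) (hX : MemHle v ν X) (hY : MemHlt v ν Y) :
    ∀ i j : Fin n, i < j →
      ((-ν i j : ℚ) : WithTop ℚ) < vQ v ((X * Y) i j - X i j) ∧
      ((-ν i j : ℚ) : WithTop ℚ) < vQ v ((Y * X) i j - X i j) := by
  intro i j hij
  obtain ⟨hXu, hXv⟩ := hX
  obtain ⟨hYu, hYv⟩ := hY
  have hXY : (X * Y) i j - X i j = Y i j + ∑ l ∈ Finset.Ioo i j, X i l * Y l j := by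
    rw [hXu.mul_apply_of_lt hYu hij]; ring
  have hYX : (Y * X) i j - X i j = Y i j + ∑ l ∈ Finset.Ioo i j, Y i l * X l j := by
    rw [hYu.mul_apply_of_lt hXu hij]; ring
  rw [hXY, hYX]
  refine ⟨lt_vQ_add v (hYv i j hij) (lt_vQ_sum v fun l hl => ?_),
    lt_vQ_add v (hYv i j hij) (lt_vQ_sum v fun l hl => ?_)⟩ <;>
  obtain ⟨hil, hlj⟩ := Finset.mem_Ioo.mp hl
  · exact lt_vQ_mul_of_le_of_lt v (hν i l j hil hlj) (hXv i l hil) (hYv l j hlj)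
  · exact lt_vQ_mul_of_lt_of_le v (hν i l j hil hlj) (hYv i l hil) (hXv l j hlj)
end

section
/- Let X, Y ∈ FT_n(M) with both X and Y nilpotent (strictly upper triangular). Then v_M(XY) ≥ min(ṽ_M(X), ṽ_M(Y)), where ṽ_M omits the (1,n) entry from the defining minimum. -/
/-- The set `FT_n(M)`: upper triangular matrices whose diagonal entries all equal a common
element of the prime field `𝔽_p`. -/
def IsFT (p : ℕ) {n : ℕ} {M : Type*} [Field M] (X : Matrix (Fin n) (Fin n) M) : Prop :=
  (∀ i j : Fin n, j < i → X i j = 0) ∧ ∃ c : ZMod p, ∀ i : Fin n, X i i = ZMod.cast c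

/-- The matrix valuation `v_M(X) = min_{i<j} v_M(x_{i,j})/(j-i)`, with values in
`ℚ ∪ {+∞}`. -/
noncomputable def vmat {n : ℕ} {M : Type*} [Field M] (v : AddValuation M (WithTop ℤ))
    (X : Matrix (Fin n) (Fin n) M) : WithTop ℚ :=
  Finset.univ.inf fun ij : Fin n × Fin n =>
    if ij.1 < ij.2 then
      WithTop.map (fun z : ℤ => (z : ℚ) / ((ij.2 : ℚ) - (ij.1 : ℚ))) (v (X ij.1 ij.2))
    else ⊤

/-- The matrix valuation `ṽ_M(X)`: same as `v_M(X)` but omitting the `(1,n)` entry. -/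
noncomputable def vtil {n : ℕ} {M : Type*} [Field M] (v : AddValuation M (WithTop ℤ))
    (X : Matrix (Fin n) (Fin n) M) : WithTop ℚ :=
  Finset.univ.inf fun ij : Fin n × Fin n =>
    if ij.1 < ij.2 ∧ ¬((ij.1 : ℕ) = 0 ∧ (ij.2 : ℕ) = n - 1) then
      WithTop.map (fun z : ℤ => (z : ℚ) / ((ij.2 : ℚ) - (ij.1 : ℚ))) (v (X ij.1 ij.2))
    else ⊤

/-!
Write `v_{j-i}(x) = v(x)/(j-i)` for the normalised valuation of an entry in position `(i, j)`.
Since `X` and `Y` are strictly upper triangular, `(XY)_{ij} = ∑_{i<k<j} X_{ik} Y_{kj}`, and in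
each term neither `(i, k)` nor `(k, j)` is the corner `(1, n)`, so both factors are controlled
by `ṽ`. If `t ≤ v(a)/(k-i)` and `t ≤ v(b)/(j-k)` then `t ≤ (v(a) + v(b))/(j-i)`, and the
ultrametric inequality passes the bound from the terms to the sum.
-/

lemma monotone_map_div {c : ℚ} (hc : 0 ≤ c) :
    Monotone (WithTop.map fun z : ℤ => (z : ℚ) / c) :=
  Monotone.withTop_map fun _ _ h => div_le_div_of_nonneg_right (Int.cast_le.2 h) hc

lemma le_map_div_add {c d : ℚ} (hc : 0 < c) (hd : 0 < d) {a b : WithTop ℤ} {t : WithTop ℚ}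
    (ha : t ≤ WithTop.map (fun z : ℤ => (z : ℚ) / c) a)
    (hb : t ≤ WithTop.map (fun z : ℤ => (z : ℚ) / d) b) :
    t ≤ WithTop.map (fun z : ℤ => (z : ℚ) / (c + d)) (a + b) := by
  induction a with
  | top => simp
  | coe a =>
  induction b with
  | top => simp
  | coe b =>
  induction t with
  | top => simp at ha
  | coe t =>
  simp only [WithTop.map_coe, WithTop.coe_le_coe, ← WithTop.coe_add] at ha hb ⊢
  rw [le_div_iff₀ hc] at ha
  rw [le_div_iff₀ hd] at hb
  rw [le_div_iff₀ (add_pos hc hd)]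
  push_cast
  linarith

lemma AddValuation.le_map_div_sum {R ι : Type*} [CommRing R] (v : AddValuation R (WithTop ℤ))
    {c : ℚ} (hc : 0 ≤ c) {t : WithTop ℚ} (s : Finset ι) (f : ι → R)
    (hf : ∀ k ∈ s, t ≤ WithTop.map (fun z : ℤ => (z : ℚ) / c) (v (f k))) :
    t ≤ WithTop.map (fun z : ℤ => (z : ℚ) / c) (v (∑ k ∈ s, f k)) := by
  refine Finset.sum_induction f (fun x => t ≤ WithTop.map (fun z : ℤ => (z : ℚ) / c) (v x))
    (fun x y hx hy => ?_) (by simp) hf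
  calc t ≤ min (WithTop.map (fun z : ℤ => (z : ℚ) / c) (v x))
        (WithTop.map (fun z : ℤ => (z : ℚ) / c) (v y)) := le_min hx hy
    _ = WithTop.map (fun z : ℤ => (z : ℚ) / c) (min (v x) (v y)) :=
        ((monotone_map_div hc).map_min).symm
    _ ≤ WithTop.map (fun z : ℤ => (z : ℚ) / c) (v (x + y)) :=
        monotone_map_div hc (v.map_add x y)

lemma vtil_le_map_div {n : ℕ} {M : Type*} [Field M] (v : AddValuation M (WithTop ℤ))
    (X : Matrix (Fin n) (Fin n) M) {i j : Fin n} (hij : i < j)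
    (hcorner : ¬((i : ℕ) = 0 ∧ (j : ℕ) = n - 1)) :
    vtil v X ≤ WithTop.map (fun z : ℤ => (z : ℚ) / ((j : ℚ) - (i : ℚ))) (v (X i j)) := by
  refine (Finset.inf_le (Finset.mem_univ (i, j))).trans_eq ?_
  exact if_pos ⟨hij, hcorner⟩

lemma min_vtil_le_map_div_mul {n : ℕ} {M : Type*} [Field M] (v : AddValuation M (WithTop ℤ))
    {X Y : Matrix (Fin n) (Fin n) M}
    (hX : ∀ i j : Fin n, j ≤ i → X i j = 0) (hY : ∀ i j : Fin n, j ≤ i → Y i j = 0)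
    (i k j : Fin n) :
    min (vtil v X) (vtil v Y) ≤
      WithTop.map (fun z : ℤ => (z : ℚ) / ((j : ℚ) - (i : ℚ))) (v (X i k * Y k j)) := by
  rcases le_or_gt k i with hki | hik
  · simp [hX i k hki]
  rcases le_or_gt j k with hjk | hkj
  · simp [hY k j hjk]
  have hik' : (i : ℚ) < k := by exact_mod_cast hik
  have hkj' : (k : ℚ) < j := by exact_mod_cast hkj
  have hXik := vtil_le_map_div v X hik fun h => by have := j.isLt; omega
  have hYkj := vtil_le_map_div v Y hkj fun h => by have : (i : ℕ) < k := hik; omega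
  have := le_map_div_add (sub_pos.2 hik') (sub_pos.2 hkj')
    ((min_le_left _ _).trans hXik) ((min_le_right _ _).trans hYkj)
  rwa [sub_add_sub_cancel', ← v.map_mul] at this

theorem vmat_mul_nilpotent_nilpotent_general {n : ℕ} {M : Type*} [Field M]
    (v : AddValuation M (WithTop ℤ)) (X Y : Matrix (Fin n) (Fin n) M)
    (hXnil : ∀ i j : Fin n, j ≤ i → X i j = 0) (hYnil : ∀ i j : Fin n, j ≤ i → Y i j = 0) :
    min (vtil v X) (vtil v Y) ≤ vmat v (X * Y) := by
  refine Finset.le_inf fun ⟨i, j⟩ _ => ?_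
  dsimp only
  split_ifs with hij
  · have hij' : (i : ℚ) < j := by exact_mod_cast hij
    rw [Matrix.mul_apply]
    exact v.le_map_div_sum (sub_nonneg.2 hij'.le) _ _ fun k _ =>
      min_vtil_le_map_div_mul v hXnil hYnil i k j
  · exact le_top

/-- For `X, Y ∈ FT_n(M)` both nilpotent (strictly upper triangular),
`v_M(XY) ≥ min(ṽ_M(X), ṽ_M(Y))`. -/
theorem vmat_mul_nilpotent_nilpotent {p n : ℕ} (hp : p.Prime) {M : Type*} [Field M]
    [CharP M p] (v : AddValuation M (WithTop ℤ)) (X Y : Matrix (Fin n) (Fin n) M)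
    (hX : IsFT p X) (hY : IsFT p Y)
    (hXnil : ∀ i j : Fin n, j ≤ i → X i j = 0) (hYnil : ∀ i j : Fin n, j ≤ i → Y i j = 0) :
    min (vtil v X) (vtil v Y) ≤ vmat v (X * Y) :=
  vmat_mul_nilpotent_nilpotent_general v X Y hXnil hYnil
end

section
/- Let X, Y ∈ FT_n(M) with X invertible and v_M(X) > v_M(Y). Then v_M(XY) = v_M(YX) = v_M(Y). -/
/-!
Put `q = v_M(Y)`. The condition `v(z_{ab}) ≥ (b - a) q` for all `a, b` holds for `X` and `Y`
(diagonal entries lie in `𝔽_p`, so have valuation `≥ 0`) and is stable under products, whence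
`v_M(XY), v_M(YX) ≥ q`. If `v(y_{ij}) = (j - i) q` realises the minimum, then in
`(XY)_{ij} = ∑ₖ x_{ik} y_{kj}` the term `x_{ii} y_{ij}` has valuation exactly `(j - i) q`, since
`x_{ii}` is a nonzero element of `𝔽_p` and thus has valuation `0`, while `v_M(X) > q` makes every
other term strictly larger. The same holds for `(YX)_{ij}` with the term `y_{ij} x_{jj}`.
-/

open Matrix

namespace AddValuation

theorem map_sum_eq_of_lt {R Γ₀ ι : Type*} [Ring R] [LinearOrderedAddCommMonoidWithTop Γ₀]
    (v : AddValuation R Γ₀) [DecidableEq ι] {s : Finset ι} {f : ι → R} {j : ι} (hj : j ∈ s)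
    (hf : ∀ i ∈ s.erase j, v (f j) < v (f i)) : v (∑ i ∈ s, f i) = v (f j) := by
  rw [← Finset.add_sum_erase s f hj]
  rcases eq_or_ne (v (f j)) ⊤ with htop | htop
  · have hrest : ∑ i ∈ s.erase j, f i = 0 :=
      Finset.sum_eq_zero fun i hi => absurd (hf i hi) (htop ▸ not_top_lt)
    rw [hrest, add_zero]
  · exact v.map_add_eq_of_lt_left (v.map_lt_sum htop hf)

variable {K Γ : Type*} [Field K] [AddCommGroup Γ] [LinearOrder Γ] [IsOrderedAddMonoid Γ]
  (v : AddValuation K (WithTop Γ))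

theorem map_eq_zero_of_pow_eq_one {x : K} {k : ℕ} (hx : x ^ k = 1) (hk : k ≠ 0) : v x = 0 := by
  have hx0 : x ≠ 0 := by
    rintro rfl
    exact zero_ne_one ((zero_pow hk).symm.trans hx)
  obtain ⟨g, hg⟩ := WithTop.ne_top_iff_exists.1 (v.ne_top_iff.2 hx0)
  have hkg : k • g = 0 := by
    have := v.map_pow x k
    rw [hx, v.map_one, ← hg, ← WithTop.coe_nsmul] at this
    exact_mod_cast this.symm
  rw [← hg, (nsmul_eq_zero_iff.1 hkg).resolve_right hk, WithTop.coe_zero]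

theorem map_zmodCast_eq_zero {p : ℕ} [Fact p.Prime] [CharP K p] {c : ZMod p}
    (hc : (ZMod.cast c : K) ≠ 0) : v (ZMod.cast c) = 0 := by
  have hc' : c ≠ 0 := by
    rintro rfl
    exact hc ZMod.cast_zero
  refine v.map_eq_zero_of_pow_eq_one (k := p - 1) ?_
    (Nat.sub_ne_zero_of_lt (Fact.out : p.Prime).one_lt)
  rw [← ZMod.castHom_apply (h := dvd_refl p), ← _root_.map_pow, ZMod.pow_card_sub_one_eq_one hc',
    _root_.map_one]

theorem map_zmodCast_nonneg {p : ℕ} [Fact p.Prime] [CharP K p] (c : ZMod p) :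
    0 ≤ v (ZMod.cast c) := by
  by_cases hc : (ZMod.cast c : K) = 0
  · rw [hc, v.map_zero]
    exact le_top
  · rw [v.map_zmodCast_eq_zero hc]

noncomputable def toRat {R : Type*} [Ring R] (v : AddValuation R (WithTop ℤ)) :
    AddValuation R (WithTop ℚ) :=
  v.map (Int.castAddHom ℚ).withTopMap rfl Int.cast_mono.withTop_map

theorem toRat_apply {R : Type*} [Ring R] (v : AddValuation R (WithTop ℤ)) (x : R) :
    v.toRat x = (v x).map Int.cast :=
  rfl

end AddValuation

namespace Matrix

variable {ι R Γ : Type*} [CommRing R] [AddCommGroup Γ] [LinearOrder Γ]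
  [IsOrderedAddMonoid Γ] (w : AddValuation R (WithTop Γ)) (r : ι → Γ)

/-- `diag(π^r) * Z * diag(π^(-r))` is integral, for a formal `π` of valuation `1`. -/
def IsWeightBounded (Z : Matrix ι ι R) : Prop :=
  ∀ a b, ((r b - r a : Γ) : WithTop Γ) ≤ w (Z a b)

variable {w r}

theorem IsWeightBounded.mul [Fintype ι] {A B : Matrix ι ι R} (hA : IsWeightBounded w r A)
    (hB : IsWeightBounded w r B) : IsWeightBounded w r (A * B) := fun a b =>
  w.map_le_sum fun k _ => by
    rw [w.map_mul, ← sub_add_sub_cancel' (r k) (r a) (r b), WithTop.coe_add]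
    exact add_le_add (hA a k) (hB k b)

theorem IsWeightBounded.transpose {Z : Matrix ι ι R} (hZ : IsWeightBounded w r Z) :
    IsWeightBounded w (-r) Zᵀ := fun a b => by
  simpa only [Pi.neg_apply, neg_sub_neg, transpose_apply] using hZ b a

theorem map_mul_apply_eq_left [Fintype ι] [DecidableEq ι] {A B : Matrix ι ι R} {i j : ι}
    (hA : ∀ a b, a ≠ b → ((r b - r a : Γ) : WithTop Γ) < w (A a b)) (hAi : w (A i i) = 0)
    (hB : IsWeightBounded w r B) (hBij : w (B i j) = (r j - r i : Γ)) :
    w ((A * B) i j) = (r j - r i : Γ) := by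
  have hmain : w (A i i * B i j) = (r j - r i : Γ) := by rw [w.map_mul, hAi, hBij, zero_add]
  rw [mul_apply, w.map_sum_eq_of_lt (Finset.mem_univ i), hmain]
  intro k hk
  rw [hmain, w.map_mul, ← sub_add_sub_cancel' (r k) (r i) (r j), WithTop.coe_add]
  exact WithTop.add_lt_add_of_lt_of_le WithTop.coe_ne_top
    (hA i k (Finset.ne_of_mem_erase hk).symm) (hB k j)

theorem map_mul_apply_eq_right [Fintype ι] [DecidableEq ι] {A B : Matrix ι ι R} {i j : ι}
    (hA : ∀ a b, a ≠ b → ((r b - r a : Γ) : WithTop Γ) < w (A a b)) (hAj : w (A j j) = 0)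
    (hB : IsWeightBounded w r B) (hBij : w (B i j) = (r j - r i : Γ)) :
    w ((B * A) i j) = (r j - r i : Γ) := by
  have hAt : ∀ a b, a ≠ b → (((-r) b - (-r) a : Γ) : WithTop Γ) < w (Aᵀ a b) :=
    fun a b hab => by simpa only [Pi.neg_apply, neg_sub_neg, transpose_apply] using hA b a hab.symm
  have hBt : w (Bᵀ j i) = ((-r) i - (-r) j : Γ) := by
    rw [transpose_apply, hBij, Pi.neg_apply, Pi.neg_apply, neg_sub_neg]
  rw [← transpose_apply (B * A), transpose_mul, map_mul_apply_eq_left hAt hAj hB.transpose hBt,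
    Pi.neg_apply, Pi.neg_apply, neg_sub_neg]

end Matrix

section vmat

variable {n : ℕ} {M : Type*} [Field M] (v : AddValuation M (WithTop ℤ))

theorem WithTop.coe_le_map_div_iff {d q : ℚ} (hd : 0 < d) (x : WithTop ℤ) :
    (q : WithTop ℚ) ≤ x.map (fun z : ℤ => (z : ℚ) / d) ↔
      ((d * q : ℚ) : WithTop ℚ) ≤ x.map Int.cast := by
  cases x with
  | top => exact iff_of_true le_top le_top
  | coe z =>
    rw [WithTop.map_coe, WithTop.map_coe, WithTop.coe_le_coe, WithTop.coe_le_coe, le_div_iff₀ hd,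
      mul_comm]

theorem WithTop.map_div_le_coe_iff {d q : ℚ} (hd : 0 < d) (x : WithTop ℤ) :
    x.map (fun z : ℤ => (z : ℚ) / d) ≤ q ↔ x.map Int.cast ≤ ((d * q : ℚ) : WithTop ℚ) := by
  cases x with
  | top => exact iff_of_false (WithTop.not_top_le_coe _) (WithTop.not_top_le_coe _)
  | coe z =>
    rw [WithTop.map_coe, WithTop.map_coe, WithTop.coe_le_coe, WithTop.coe_le_coe, div_le_iff₀ hd,
      mul_comm]

theorem coe_le_vmat_iff (Z : Matrix (Fin n) (Fin n) M) (q : ℚ) :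
    (q : WithTop ℚ) ≤ vmat v Z ↔
      ∀ i j : Fin n, i < j → (((j : ℚ) * q - i * q : ℚ) : WithTop ℚ) ≤ v.toRat (Z i j) := by
  simp only [vmat, Finset.le_inf_iff, Finset.mem_univ, true_implies, Prod.forall]
  refine forall₂_congr fun i j => ?_
  split_ifs with hij
  · simp [hij, WithTop.coe_le_map_div_iff (sub_pos.2 (Nat.cast_lt.2 hij)), sub_mul,
      AddValuation.toRat_apply]
  · simp [hij]

theorem coe_lt_vmat_iff (Z : Matrix (Fin n) (Fin n) M) (q : ℚ) :
    (q : WithTop ℚ) < vmat v Z ↔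
      ∀ i j : Fin n, i < j → (((j : ℚ) * q - i * q : ℚ) : WithTop ℚ) < v.toRat (Z i j) := by
  simp only [vmat, Finset.lt_inf_iff (WithTop.coe_lt_top q), Finset.mem_univ, true_implies,
    Prod.forall]
  refine forall₂_congr fun i j => ?_
  split_ifs with hij
  · simp [hij, ← not_le, WithTop.map_div_le_coe_iff (sub_pos.2 (Nat.cast_lt.2 hij)), sub_mul,
      AddValuation.toRat_apply]
  · simp [hij]

theorem vmat_le_coe_iff (Z : Matrix (Fin n) (Fin n) M) (q : ℚ) :
    vmat v Z ≤ q ↔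
      ∃ i j : Fin n, i < j ∧ v.toRat (Z i j) ≤ (((j : ℚ) * q - i * q : ℚ) : WithTop ℚ) := by
  simp only [vmat, Finset.inf_le_iff (WithTop.coe_lt_top q), Finset.mem_univ, true_and,
    Prod.exists]
  refine exists₂_congr fun i j => ?_
  split_ifs with hij
  · simp [hij, WithTop.map_div_le_coe_iff (sub_pos.2 (Nat.cast_lt.2 hij)), sub_mul,
      AddValuation.toRat_apply]
  · simp [hij]

end vmat

namespace IsFT

variable {p n : ℕ} {M : Type*} [Field M] {Z : Matrix (Fin n) (Fin n) M}

theorem isUpperTriangular (hZ : IsFT p Z) : Z.IsUpperTriangular := fun i j hji => hZ.1 i j hji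

variable [Fact p.Prime] [CharP M p] (v : AddValuation M (WithTop ℤ))

theorem toRat_diag_nonneg (hZ : IsFT p Z) (a : Fin n) : 0 ≤ v.toRat (Z a a) := by
  obtain ⟨-, c, hc⟩ := hZ
  rw [hc a]
  exact v.toRat.map_zmodCast_nonneg c

theorem toRat_diag_eq_zero (hZ : IsFT p Z) (hu : IsUnit Z) (a : Fin n) :
    v.toRat (Z a a) = 0 := by
  have hdet : Z.det ≠ 0 := ((Matrix.isUnit_iff_isUnit_det Z).1 hu).ne_zero
  rw [Matrix.det_of_isUpperTriangular hZ.isUpperTriangular] at hdet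
  obtain ⟨-, c, hc⟩ := hZ
  rw [hc a]
  exact v.toRat.map_zmodCast_eq_zero (hc a ▸ Finset.prod_ne_zero_iff.1 hdet a (Finset.mem_univ a))

theorem isWeightBounded_of_coe_le_vmat (hZ : IsFT p Z) {q : ℚ}
    (hq : (q : WithTop ℚ) ≤ vmat v Z) :
    IsWeightBounded v.toRat (fun a : Fin n => (a : ℚ) * q) Z := by
  intro a b
  rcases lt_trichotomy a b with hab | rfl | hba
  · exact (coe_le_vmat_iff v Z q).1 hq a b hab
  · rw [sub_self, WithTop.coe_zero]
    exact hZ.toRat_diag_nonneg v a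
  · rw [hZ.1 a b hba, AddValuation.map_zero]
    exact le_top

end IsFT

section

variable {n : ℕ} {M : Type*} [Field M] {v : AddValuation M (WithTop ℤ)}
  {Z : Matrix (Fin n) (Fin n) M} {q : ℚ}

theorem Matrix.IsWeightBounded.coe_le_vmat
    (hZ : IsWeightBounded v.toRat (fun a : Fin n => (a : ℚ) * q) Z) :
    (q : WithTop ℚ) ≤ vmat v Z :=
  (coe_le_vmat_iff v Z q).2 fun a b _ => hZ a b

theorem Matrix.IsUpperTriangular.toRat_lt_of_coe_lt_vmat (hZ : Z.IsUpperTriangular)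
    (hq : (q : WithTop ℚ) < vmat v Z) (a b : Fin n) (hab : a ≠ b) :
    (((b : ℚ) * q - a * q : ℚ) : WithTop ℚ) < v.toRat (Z a b) := by
  rcases hab.lt_or_gt with hab | hba
  · exact (coe_lt_vmat_iff v Z q).1 hq a b hab
  · rw [hZ hba, AddValuation.map_zero]
    exact WithTop.coe_lt_top _

end

/-- For `X, Y ∈ FT_n(M)` with `X` invertible and `v_M(X) > v_M(Y)`,
`v_M(XY) = v_M(YX) = v_M(Y)`. -/
theorem vmat_mul_of_invertible {p n : ℕ} (hp : p.Prime) {M : Type*} [Field M] [CharP M p]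
    (v : AddValuation M (WithTop ℤ)) (X Y : Matrix (Fin n) (Fin n) M)
    (hX : IsFT p X) (hY : IsFT p Y) (hXu : IsUnit X) (hv : vmat v Y < vmat v X) :
    vmat v (X * Y) = vmat v Y ∧ vmat v (Y * X) = vmat v Y := by
  have := Fact.mk hp
  obtain ⟨q, hq⟩ : ∃ q : ℚ, vmat v Y = q :=
    (WithTop.ne_top_iff_exists.1 (hv.trans_le le_top).ne).imp fun _ => Eq.symm
  rw [hq] at hv ⊢
  have hYr := hY.isWeightBounded_of_coe_le_vmat v hq.ge
  have hXr := hX.isWeightBounded_of_coe_le_vmat v hv.le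
  have hXstrict := hX.isUpperTriangular.toRat_lt_of_coe_lt_vmat hv
  obtain ⟨i, j, hij, hYij_le⟩ := (vmat_le_coe_iff v Y q).1 hq.le
  have hYij := le_antisymm hYij_le (hYr i j)
  refine ⟨le_antisymm ?_ (hXr.mul hYr).coe_le_vmat, le_antisymm ?_ (hYr.mul hXr).coe_le_vmat⟩
  · have hXYij := map_mul_apply_eq_left hXstrict (hX.toRat_diag_eq_zero v hXu i) hYr hYij
    exact (vmat_le_coe_iff v _ q).2 ⟨i, j, hij, hXYij.le⟩
  · have hYXij := map_mul_apply_eq_right hXstrict (hX.toRat_diag_eq_zero v hXu j) hYr hYij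
    exact (vmat_le_coe_iff v _ q).2 ⟨i, j, hij, hYXij.le⟩
end

section
/- Let X ∈ FT_n(M) be invertible. Then v_M(X⁻¹) = v_M(X) and ṽ_M(X⁻¹) = ṽ_M(X). -/
open Finset

section Aux

variable {M : Type*} [Field M]

noncomputable def vq (v : AddValuation M (WithTop ℤ)) (x : M) : WithTop ℚ :=
  WithTop.map (fun z : ℤ => (z : ℚ)) (v x)

def mulC (q : ℚ) (x : WithTop ℚ) : WithTop ℚ := WithTop.map (fun r => q * r) x

lemma mulC_top (q : ℚ) : mulC q ⊤ = ⊤ := rfl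

lemma mulC_coe (q r : ℚ) : mulC q (r : WithTop ℚ) = ((q * r : ℚ) : WithTop ℚ) := rfl

lemma mulC_add_left (q₁ q₂ : ℚ) (x : WithTop ℚ) :
    mulC (q₁ + q₂) x = mulC q₁ x + mulC q₂ x := by
  cases x with
  | top => simp [mulC_top]
  | coe r => rw [mulC_coe, mulC_coe, mulC_coe, ← WithTop.coe_add, add_mul]

lemma mapq_mono : Monotone (WithTop.map (fun z : ℤ => (z : ℚ))) :=
  WithTop.monotone_map_iff.2 (fun a b h => by exact_mod_cast h)

lemma vq_zero (v : AddValuation M (WithTop ℤ)) : vq v 0 = ⊤ := by simp [vq]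

lemma vq_mul (v : AddValuation M (WithTop ℤ)) (a b : M) :
    vq v (a * b) = vq v a + vq v b := by
  unfold vq
  rw [v.map_mul]
  rcases hva : v a with _ | za <;> rcases hvb : v b with _ | zb <;>
    simp [WithTop.none_eq_top, WithTop.some_eq_coe, ← WithTop.coe_add]

lemma vq_add_min (v : AddValuation M (WithTop ℤ)) (x y : M) :
    min (vq v x) (vq v y) ≤ vq v (x + y) := by
  have h := mapq_mono (v.map_add x y)
  rwa [mapq_mono.map_min] at h

lemma vq_le_sum (v : AddValuation M (WithTop ℤ)) {ι : Type*} {s : Finset ι} {f : ι → M}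
    {C : WithTop ℚ} (h : ∀ i ∈ s, C ≤ vq v (f i)) : C ≤ vq v (∑ i ∈ s, f i) := by
  classical
  induction s using Finset.induction with
  | empty => simp [vq_zero]
  | insert a s hx ih =>
    rw [Finset.sum_insert hx]
    refine le_trans (le_min (h _ (mem_insert_self _ _))
      (ih fun i hi => h i (mem_insert_of_mem hi))) (vq_add_min v _ _)

lemma le_mapdiv_iff {c : ℚ} (hc : 0 < c) (μ : WithTop ℚ) (x : WithTop ℤ) :
    μ ≤ WithTop.map (fun z : ℤ => (z : ℚ) / c) x ↔
      mulC c μ ≤ WithTop.map (fun z : ℤ => (z : ℚ)) x := by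
  cases x with
  | top => simp [mulC]
  | coe a =>
    cases μ with
    | top => simp [mulC]
    | coe m =>
      rw [WithTop.map_coe, WithTop.map_coe, mulC_coe, WithTop.coe_le_coe, WithTop.coe_le_coe,
        le_div_iff₀ hc, mul_comm]

end Aux
section ZModVal

variable {M : Type*} [Field M]

lemma v_ne_top_of_ne_zero (v : AddValuation M (WithTop ℤ)) {x : M} (hx : x ≠ 0) :
    v x ≠ ⊤ := by
  intro h
  have h1 : v x + v x⁻¹ = 0 := by
    rw [← v.map_mul, mul_inv_cancel₀ hx, v.map_one]
  rw [h, top_add] at h1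
  simp at h1
  
lemma v_cast_zmod {p : ℕ} (hp : p.Prime) [CharP M p] (v : AddValuation M (WithTop ℤ))
    {c : ZMod p} (hc : c ≠ 0) :
    (ZMod.cast c : M) ≠ 0 ∧ v (ZMod.cast c : M) = 0 := by
  haveI := Fact.mk hp
  set f := ZMod.castHom (dvd_refl p) M with hf
  have happ : (f c : M) = ZMod.cast c := ZMod.castHom_apply c
  have hne : (ZMod.cast c : M) ≠ 0 := by
    rw [← happ]
    exact fun h => hc (f.injective (by rw [h, map_zero]))
  refine ⟨hne, ?_⟩
  have hpow : (ZMod.cast c : M) ^ (p - 1) = 1 := by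
    rw [← happ, ← map_pow, ZMod.pow_card_sub_one_eq_one hc, map_one]
  have hv : (p - 1) • v (ZMod.cast c : M) = 0 := by
    rw [← v.map_pow, hpow, v.map_one]
  obtain ⟨z, hz⟩ := Option.ne_none_iff_exists'.1 (v_ne_top_of_ne_zero v hne)
  rw [hz] at hv ⊢
  rw [WithTop.some_eq_coe, ← WithTop.coe_nsmul, ← WithTop.coe_zero, WithTop.coe_eq_coe] at hv
  have hp1 : p - 1 ≠ 0 := by have := hp.two_le; omega
  have : z = 0 := by
    have := hv
    rw [nsmul_eq_mul] at this
    have : ((p-1 : ℕ) : ℤ) * z = 0 := this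
    rcases mul_eq_zero.1 this with h | h
    · exact absurd (by exact_mod_cast h) hp1
    · exact h
  simp [WithTop.some_eq_coe, this]

end ZModVal
section Bnd

variable {M : Type*} [Field M] {n : ℕ}

def Bnd (v : AddValuation M (WithTop ℤ)) (μ μt : WithTop ℚ) (k : ℕ)
    (A : Matrix (Fin n) (Fin n) M) : Prop :=
  (∀ i j : Fin n, (j : ℕ) < (i : ℕ) + k → A i j = 0) ∧
  (∀ i j : Fin n, (i : ℕ) < (j : ℕ) →
    mulC (((j : ℕ) : ℚ) - ((i : ℕ) : ℚ)) μ ≤ vq v (A i j)) ∧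
  (∀ i j : Fin n, (i : ℕ) < (j : ℕ) → ¬((i : ℕ) = 0 ∧ (j : ℕ) = n - 1) →
    mulC (((j : ℕ) : ℚ) - ((i : ℕ) : ℚ)) μt ≤ vq v (A i j))

lemma Bnd_mul {v : AddValuation M (WithTop ℤ)} {μ μt : WithTop ℚ} {a b : ℕ}
    (ha : 1 ≤ a) (hb : 1 ≤ b) {A B : Matrix (Fin n) (Fin n) M}
    (hA : Bnd v μ μt a A) (hB : Bnd v μ μt b B) : Bnd v μ μt (a + b) (A * B) := by
  obtain ⟨hA0, hA1, hA2⟩ := hA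
  obtain ⟨hB0, hB1, hB2⟩ := hB
  have key : ∀ (i j k : Fin n), ¬ ((k : ℕ) < (i : ℕ) + a) → ¬ ((j : ℕ) < (k : ℕ) + b) →
      ((i : ℕ) < (k : ℕ) ∧ (k : ℕ) < (j : ℕ)) := by
    intro i j k h1 h2; omega
  refine ⟨?_, ?_, ?_⟩
  · intro i j hj
    rw [Matrix.mul_apply]
    apply Finset.sum_eq_zero
    intro k _
    by_cases hk : (k : ℕ) < (i : ℕ) + a
    · rw [hA0 i k hk, zero_mul]
    · rw [hB0 k j (by omega), mul_zero]
  · intro i j hij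
    rw [Matrix.mul_apply]
    apply vq_le_sum
    intro k _
    by_cases hk1 : (k : ℕ) < (i : ℕ) + a
    · rw [hA0 i k hk1, zero_mul, vq_zero]; exact le_top
    by_cases hk2 : (j : ℕ) < (k : ℕ) + b
    · rw [hB0 k j hk2, mul_zero, vq_zero]; exact le_top
    obtain ⟨hik, hkj⟩ := key i j k hk1 hk2
    rw [vq_mul]
    have e : (((j : ℕ) : ℚ) - ((i : ℕ) : ℚ))
        = (((k : ℕ) : ℚ) - ((i : ℕ) : ℚ)) + (((j : ℕ) : ℚ) - ((k : ℕ) : ℚ)) := by ring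
    rw [e, mulC_add_left]
    exact add_le_add (hA1 i k hik) (hB1 k j hkj)
  · intro i j hij hcor
    rw [Matrix.mul_apply]
    apply vq_le_sum
    intro k _
    by_cases hk1 : (k : ℕ) < (i : ℕ) + a
    · rw [hA0 i k hk1, zero_mul, vq_zero]; exact le_top
    by_cases hk2 : (j : ℕ) < (k : ℕ) + b
    · rw [hB0 k j hk2, mul_zero, vq_zero]; exact le_top
    obtain ⟨hik, hkj⟩ := key i j k hk1 hk2
    have hjn : (j : ℕ) < n := j.isLt
    have hc1 : ¬((i : ℕ) = 0 ∧ (k : ℕ) = n - 1) := by omega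
    have hc2 : ¬((k : ℕ) = 0 ∧ (j : ℕ) = n - 1) := by omega
    rw [vq_mul]
    have e : (((j : ℕ) : ℚ) - ((i : ℕ) : ℚ))
        = (((k : ℕ) : ℚ) - ((i : ℕ) : ℚ)) + (((j : ℕ) : ℚ) - ((k : ℕ) : ℚ)) := by ring
    rw [e, mulC_add_left]
    exact add_le_add (hA2 i k hik hc1) (hB2 k j hkj hc2)

lemma Bnd_pow {v : AddValuation M (WithTop ℤ)} {μ μt : WithTop ℚ}
    {N : Matrix (Fin n) (Fin n) M} (hN : Bnd v μ μt 1 N) :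
    ∀ k, 1 ≤ k → Bnd v μ μt k (N ^ k) := by
  intro k hk
  induction k with
  | zero => omega
  | succ k ih =>
    rcases Nat.eq_zero_or_pos k with h0 | h1
    · subst h0; simpa [pow_one] using hN
    · have := Bnd_mul h1 le_rfl (ih h1) hN
      rwa [pow_succ]

end Bnd
lemma main_le {p n : ℕ} (hp : p.Prime) {M : Type*} [Field M] [CharP M p] (hn : 0 < n)
    (v : AddValuation M (WithTop ℤ)) (X : Matrix (Fin n) (Fin n) M)
    (c : ZMod p) (hc : c ≠ 0) (hlow : ∀ i j : Fin n, j < i → X i j = 0)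
    (hdiag : ∀ i : Fin n, X i i = ZMod.cast c) :
    (∀ i j : Fin n, j < i → X⁻¹ i j = 0) ∧ (∀ i : Fin n, X⁻¹ i i = ZMod.cast (c⁻¹ : ZMod p)) ∧
    vmat v X ≤ vmat v X⁻¹ ∧ vtil v X ≤ vtil v X⁻¹ := by
  classical
  haveI := Fact.mk hp
  obtain ⟨hcM0, hvcM⟩ := v_cast_zmod hp v hc
  set cM : M := ZMod.cast c with hcMdef
  set N : Matrix (Fin n) (Fin n) M := X - cM • 1 with hNdef
  have hNlow : ∀ i j : Fin n, (j : ℕ) ≤ (i : ℕ) → N i j = 0 := by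
    intro i j hji
    rcases eq_or_lt_of_le hji with heq | hlt
    · have : j = i := Fin.ext heq
      subst this
      simp [hNdef, hdiag j, Matrix.one_apply_eq, hcMdef]
    · have hne : i ≠ j := by intro h; subst h; omega
      simp [hNdef, hlow i j (by exact hlt), Matrix.one_apply_ne hne]
  have hNoff : ∀ i j : Fin n, (i : ℕ) < (j : ℕ) → N i j = X i j := by
    intro i j hij
    have hne : i ≠ j := by intro h; subst h; omega
    simp [hNdef, Matrix.one_apply_ne hne]
  -- the two valuation bounds for entries of X
  have hXbound : ∀ i j : Fin n, (i : ℕ) < (j : ℕ) →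
      mulC (((j : ℕ) : ℚ) - ((i : ℕ) : ℚ)) (vmat v X) ≤ vq v (X i j) := by
    intro i j hij
    have h1 : vmat v X ≤ (if (i, j).1 < (i, j).2 then
        WithTop.map (fun z : ℤ => (z : ℚ) / (((i, j).2 : ℚ) - ((i, j).1 : ℚ))) (v (X (i, j).1 (i, j).2))
      else ⊤) := Finset.inf_le (Finset.mem_univ (i, j))
    rw [if_pos (show (i, j).1 < (i, j).2 from hij)] at h1
    have hpos : (0 : ℚ) < ((j : ℕ) : ℚ) - ((i : ℕ) : ℚ) := by
      rw [sub_pos]; exact_mod_cast hij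
    exact (le_mapdiv_iff hpos _ _).1 h1
  have hXboundt : ∀ i j : Fin n, (i : ℕ) < (j : ℕ) → ¬((i : ℕ) = 0 ∧ (j : ℕ) = n - 1) →
      mulC (((j : ℕ) : ℚ) - ((i : ℕ) : ℚ)) (vtil v X) ≤ vq v (X i j) := by
    intro i j hij hcor
    have h1 : vtil v X ≤ (if (i, j).1 < (i, j).2 ∧ ¬(((i, j).1 : ℕ) = 0 ∧ ((i, j).2 : ℕ) = n - 1) then
        WithTop.map (fun z : ℤ => (z : ℚ) / (((i, j).2 : ℚ) - ((i, j).1 : ℚ))) (v (X (i, j).1 (i, j).2))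
      else ⊤) := Finset.inf_le (Finset.mem_univ (i, j))
    rw [if_pos (show ((i, j).1 < (i, j).2 ∧ _) from ⟨hij, hcor⟩)] at h1
    have hpos : (0 : ℚ) < ((j : ℕ) : ℚ) - ((i : ℕ) : ℚ) := by
      rw [sub_pos]; exact_mod_cast hij
    exact (le_mapdiv_iff hpos _ _).1 h1
  have hN1 : Bnd v (vmat v X) (vtil v X) 1 N := by
    refine ⟨fun i j hj => hNlow i j (by omega), fun i j hij => ?_, fun i j hij hcor => ?_⟩
    · rw [hNoff i j hij]; exact hXbound i j hij
    · rw [hNoff i j hij]; exact hXboundt i j hij hcor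
  have hNn : N ^ n = 0 := by
    ext i j
    have := (Bnd_pow hN1 n hn).1 i j (by have := j.isLt; omega)
    simpa using this
  set Y : Matrix (Fin n) (Fin n) M :=
    ∑ k ∈ Finset.range n, ((-1 : M) ^ k * (cM⁻¹) ^ (k + 1)) • N ^ k with hYdef
  have hX' : X = cM • ((1 : Matrix (Fin n) (Fin n) M) - (-(cM⁻¹ • N))) := by
    rw [smul_sub, smul_neg, smul_smul, mul_inv_cancel₀ hcM0, one_smul, sub_neg_eq_add, hNdef]
    abel
  have hY' : Y = cM⁻¹ • ∑ k ∈ Finset.range n, (-(cM⁻¹ • N)) ^ k := by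
    rw [hYdef, Finset.smul_sum]
    apply Finset.sum_congr rfl
    intro k _
    rw [← neg_smul, smul_pow, smul_smul, neg_pow]
    congr 1
    ring
  have hAn : (-(cM⁻¹ • N)) ^ n = 0 := by
    rw [← neg_smul, smul_pow, hNn, smul_zero]
  have hXY : X * Y = 1 := by
    rw [hX', hY', Matrix.smul_mul, Matrix.mul_smul, smul_smul, mul_inv_cancel₀ hcM0, one_smul,
      mul_neg_geom_sum, hAn, sub_zero]
  have hinv : X⁻¹ = Y := Matrix.inv_eq_right_inv hXY
  have hYapply : ∀ i j : Fin n, Y i j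
      = ∑ k ∈ Finset.range n, ((-1 : M) ^ k * (cM⁻¹) ^ (k + 1)) * (N ^ k) i j := by
    intro i j
    rw [hYdef, Matrix.sum_apply]
    apply Finset.sum_congr rfl
    intro k _
    rw [Matrix.smul_apply, smul_eq_mul]
  have hvs : ∀ k : ℕ, vq v ((-1 : M) ^ k * (cM⁻¹) ^ (k + 1)) = ((0 : ℚ) : WithTop ℚ) := by
    intro k
    unfold vq
    rw [v.map_mul, v.map_pow, v.map_pow, v.map_neg, v.map_one, AddValuation.map_inv, hvcM,
      neg_zero, smul_zero, smul_zero, add_zero]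
    rfl
  refine ⟨?_, ?_, ?_, ?_⟩
  · intro i j hji
    rw [hinv, hYapply]
    apply Finset.sum_eq_zero
    intro k _
    rcases Nat.eq_zero_or_pos k with h0 | h1
    · subst h0
      have hne : i ≠ j := fun h => by subst h; exact absurd hji (lt_irrefl _)
      simp [Matrix.one_apply_ne hne]
    · rw [(Bnd_pow hN1 k h1).1 i j (by have : (j : ℕ) < (i : ℕ) := hji; omega), mul_zero]
  · intro i
    rw [hinv, hYapply]
    rw [Finset.sum_eq_single_of_mem 0 (Finset.mem_range.2 hn)]
    · have h1 := map_inv₀ (ZMod.castHom (dvd_refl p) M) c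
      rw [ZMod.castHom_apply, ZMod.castHom_apply] at h1
      simp [hcMdef, h1]
    · intro k _ hk0
      rw [(Bnd_pow hN1 k (Nat.pos_of_ne_zero hk0)).1 i i (by omega), mul_zero]
  · rw [hinv]
    apply Finset.le_inf
    rintro ⟨i, j⟩ -
    by_cases hij : i < j
    · rw [if_pos hij]
      have hvij : (i : ℕ) < (j : ℕ) := hij
      have hpos : (0 : ℚ) < ((j : ℕ) : ℚ) - ((i : ℕ) : ℚ) := by
        rw [sub_pos]; exact_mod_cast hvij
      rw [le_mapdiv_iff hpos]
      show mulC _ _ ≤ vq v (Y i j)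
      rw [hYapply]
      apply vq_le_sum
      intro k _
      rcases Nat.eq_zero_or_pos k with h0 | h1
      · subst h0
        have hne : i ≠ j := fun h => by subst h; exact absurd hvij (lt_irrefl _)
        simp only [pow_zero, Matrix.one_apply_ne hne, mul_zero, vq_zero]
        exact le_top
      · rw [vq_mul, hvs k, WithTop.coe_zero, zero_add]
        exact (Bnd_pow hN1 k h1).2.1 i j hvij
    · rw [if_neg hij]; exact le_top
  · rw [hinv]
    apply Finset.le_inf
    rintro ⟨i, j⟩ -
    by_cases hij : i < j ∧ ¬((i : ℕ) = 0 ∧ (j : ℕ) = n - 1)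
    · rw [if_pos hij]
      obtain ⟨hij1, hij2⟩ := hij
      have hvij : (i : ℕ) < (j : ℕ) := hij1
      have hpos : (0 : ℚ) < ((j : ℕ) : ℚ) - ((i : ℕ) : ℚ) := by
        rw [sub_pos]; exact_mod_cast hvij
      rw [le_mapdiv_iff hpos]
      show mulC _ _ ≤ vq v (Y i j)
      rw [hYapply]
      apply vq_le_sum
      intro k _
      rcases Nat.eq_zero_or_pos k with h0 | h1
      · subst h0
        have hne : i ≠ j := fun h => by subst h; exact absurd hvij (lt_irrefl _)
        simp only [pow_zero, Matrix.one_apply_ne hne, mul_zero, vq_zero]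
        exact le_top
      · rw [vq_mul, hvs k, WithTop.coe_zero, zero_add]
        exact (Bnd_pow hN1 k h1).2.2 i j hvij hij2
    · rw [if_neg hij]; exact le_top

/-- For invertible `X ∈ FT_n(M)`, `v_M(X⁻¹) = v_M(X)` and
`ṽ_M(X⁻¹) = ṽ_M(X)`. -/
theorem vmat_inv {p n : ℕ} (hp : p.Prime) {M : Type*} [Field M] [CharP M p]
    (v : AddValuation M (WithTop ℤ)) (X : Matrix (Fin n) (Fin n) M)
    (hX : IsFT p X) (hXu : IsUnit X) :
    vmat v X⁻¹ = vmat v X ∧ vtil v X⁻¹ = vtil v X := by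
  rcases Nat.eq_zero_or_pos n with hn | hn
  · subst hn
    constructor <;> simp [vmat, vtil, Finset.univ_eq_empty]
  · haveI := Fact.mk hp
    obtain ⟨hlow, c, hdiag⟩ := hX
    have hdet : IsUnit X.det := (Matrix.isUnit_iff_isUnit_det X).1 hXu
    have hc : c ≠ 0 := by
      intro h0
      have hzero : X.det = 0 := by
        rw [Matrix.det_of_upperTriangular (fun i j hij => hlow i j hij)]
        refine Finset.prod_eq_zero (Finset.mem_univ (⟨0, hn⟩ : Fin n)) ?_
        rw [hdiag, h0, ZMod.cast_zero]
      rw [hzero] at hdet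
      simp at hdet
    obtain ⟨hlow1, hdiag1, h1, h2⟩ := main_le hp hn v X c hc hlow hdiag
    obtain ⟨-, -, h1', h2'⟩ := main_le hp hn v X⁻¹ c⁻¹ (inv_ne_zero hc) hlow1 hdiag1
    rw [Matrix.nonsing_inv_nonsing_inv X hdet] at h1' h2'
    exact ⟨le_antisymm h1' h1, le_antisymm h2' h2⟩
end

section
/- Let X ∈ FT_n(M) be nilpotent, c an integer, and γ ∈ M with v_M(γ) = c. Then v_M(γX) ≥ min(c/(n-1), c) + v_M(X). -/
/-!
Scaling by `γ` adds `c` to the valuation of every entry, so the `(i, j)` term of `v_M(γX)` exceeds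
that of `v_M(X)` by `c / (j - i)`. Since `1 ≤ j - i ≤ n - 1`, this shift is at least `c / (n - 1)`
when `c ≥ 0` and at least `c` when `c < 0`.
-/

theorem min_div_le_div {K : Type*} [Field K] [LinearOrder K] [IsStrictOrderedRing K]
    {c N d : K} (hd : 1 ≤ d) (hdN : d ≤ N) : min (c / N) c ≤ c / d := by
  rcases le_total 0 c with hc | hc
  · exact (min_le_left _ _).trans (div_le_div_of_nonneg_left hc (by linarith) hdN)
  · refine (min_le_right _ _).trans ?_
    rw [le_div_iff₀ (by linarith)]
    nlinarith

theorem Fin.one_le_cast_sub_cast {K : Type*} [Field K] [LinearOrder K] [IsStrictOrderedRing K]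
    {n : ℕ} {i j : Fin n} (hij : i < j) : (1 : K) ≤ (j : K) - (i : K) := by
  have : (i : ℕ) + 1 ≤ j := hij
  rw [le_sub_iff_add_le']
  exact_mod_cast this

theorem Fin.cast_sub_cast_le {K : Type*} [Field K] [LinearOrder K] [IsStrictOrderedRing K]
    {n : ℕ} (i j : Fin n) : (j : K) - (i : K) ≤ (n : K) - 1 := by
  have hj : (j : ℕ) + 1 ≤ n := j.isLt
  have hj' : (j : K) + 1 ≤ n := by exact_mod_cast hj
  have hi : (0 : K) ≤ i := Nat.cast_nonneg _
  linarith

theorem WithTop.map_intCast_div_add (d : ℚ) (a b : WithTop ℤ) :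
    WithTop.map (fun z : ℤ => (z : ℚ) / d) (a + b) =
      WithTop.map (fun z : ℤ => (z : ℚ) / d) a + WithTop.map (fun z : ℤ => (z : ℚ) / d) b := by
  induction a <;> induction b <;> simp [← WithTop.coe_add, add_div]

theorem vmat_le_entry {n : ℕ} {M : Type*} [Field M] (v : AddValuation M (WithTop ℤ))
    (X : Matrix (Fin n) (Fin n) M) {i j : Fin n} (hij : i < j) :
    vmat v X ≤ WithTop.map (fun z : ℤ => (z : ℚ) / ((j : ℚ) - (i : ℚ))) (v (X i j)) :=
  (Finset.inf_le (Finset.mem_univ (i, j))).trans_eq (if_pos hij)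

theorem vmat_smul_ge_general {n : ℕ} {M : Type*} [Field M]
    (v : AddValuation M (WithTop ℤ)) (X : Matrix (Fin n) (Fin n) M)
    (c : ℤ) (γ : M) (hγ : v γ = (c : WithTop ℤ)) :
    ((min ((c : ℚ) / ((n : ℚ) - 1)) (c : ℚ) : ℚ) : WithTop ℚ) + vmat v X ≤
      vmat v (γ • X) := by
  refine Finset.le_inf fun ⟨i, j⟩ _ => ?_
  dsimp only
  split_ifs with hij
  · have hshift : min ((c : ℚ) / ((n : ℚ) - 1)) (c : ℚ) ≤ (c : ℚ) / ((j : ℚ) - (i : ℚ)) :=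
      min_div_le_div (Fin.one_le_cast_sub_cast hij) (Fin.cast_sub_cast_le i j)
    calc _ ≤ (((c : ℚ) / ((j : ℚ) - (i : ℚ)) : ℚ) : WithTop ℚ) +
          WithTop.map (fun z : ℤ => (z : ℚ) / ((j : ℚ) - (i : ℚ))) (v (X i j)) :=
          add_le_add (WithTop.coe_le_coe.2 hshift) (vmat_le_entry v X hij)
      _ = _ := by
        rw [Matrix.smul_apply, smul_eq_mul, v.map_mul, hγ, WithTop.map_intCast_div_add]
        rfl
  · exact le_top

/-- Let `X ∈ FT_n(M)` be nilpotent, `c` an integer and `γ ∈ M` with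
`v_M(γ) = c`.  Then `v_M(γX) ≥ min(c/(n-1), c) + v_M(X)`. -/
theorem vmat_smul_ge {p n : ℕ} (hp : p.Prime) (hn : 2 ≤ n) {M : Type*} [Field M] [CharP M p]
    (v : AddValuation M (WithTop ℤ)) (X : Matrix (Fin n) (Fin n) M)
    (hX : IsFT p X) (hXnil : ∀ i j : Fin n, j ≤ i → X i j = 0)
    (c : ℤ) (γ : M) (hγ : v γ = (c : WithTop ℤ)) :
    ((min ((c : ℚ) / ((n : ℚ) - 1)) (c : ℚ) : ℚ) : WithTop ℚ) + vmat v X ≤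
      vmat v (γ • X) :=
  vmat_smul_ge_general v X c γ hγ
end

section
/- Let K be a complete discrete valuation field of equal characteristic p > 0, t ∈ K with v_K(t) = -1, R a positive integer prime to p, and q a power of p. Let K_R = K(T) where T satisfies T^q + T^{q-1} = t^R. Then, setting θ = t^{R/(q-1)}/T in an algebraic closure, θ satisfies the Artin–Schreier equation θ^q - θ = t^{R/(q-1)}; in particular K_R(t^{1/(q-1)}) is separable over K(t^{1/(q-1)}), [K_R : K] = q, and the extension K_R/K has a unique upper ramification break equal to R/(q-1). -/
open IntermediateField Polynomial

/-! All roots of `X ^ q + X ^ (q - 1) = t ^ R` have valuation `-R / q`. Since `R` is prime to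
`q`, the monomials `c * T ^ i` (`c ∈ K`, `i < q`) have pairwise distinct valuations modulo `ℤ`,
so `v (∑ cᵢ Tⁱ) = min v (cᵢ Tⁱ)`. This gives `[K(T) : K] = q`, and shows that `v x ≥ 0` forces
`v (cᵢ Tⁱ) ≥ 1 / q` for `0 < i`. Another root is `B = T (1 - u)`, and Frobenius turns the equation
into `u ^ (q - 1) (1 + B) = 1`, so `v u = R / (q (q - 1))`. Hence
`σ x - x = ∑ cᵢ Tⁱ ((1 - u)ⁱ - 1)` has valuation at least `1 / q + v u`, with equality for
`x = t ^ (-M) T ^ n` where `n R + 1 = q M`. -/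

section Field

variable {F : Type*} [Field F] {k : ℕ}

lemma div_pow_succ_sub_div {s T : F} (hT : T ≠ 0) (hs : s ^ k = T ^ (k + 1) + T ^ k) :
    (s / T) ^ (k + 1) - s / T = s := by
  rw [div_pow, pow_succ s, hs]
  field_simp
  ring

lemma separable_X_pow_succ_add_X_pow_sub_C (hk : ((k + 1 : ℕ) : F) = 0) {c : F} (hc : c ≠ 0) :
    (X ^ (k + 1) + X ^ k - C c : F[X]).Separable := by
  obtain ⟨m, rfl⟩ : ∃ m, k = m + 1 := by
    refine Nat.exists_eq_add_one.mpr (Nat.pos_of_ne_zero ?_)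
    rintro rfl
    simp at hk
  have hm : ((m + 1 : ℕ) : F) = -1 := by push_cast at hk ⊢; linear_combination hk
  have hder : derivative (X ^ (m + 2) + X ^ (m + 1) - C c : F[X]) = -X ^ m := by
    simp only [derivative_sub, derivative_add, derivative_X_pow, derivative_C, hk, hm,
      Nat.add_sub_cancel, map_neg, map_one]
    simp
  have hcoprime : IsCoprime (X ^ (m + 2) + X ^ (m + 1) - C c : F[X]) X :=
    ⟨-C c⁻¹, C c⁻¹ * (X ^ (m + 1) + X ^ m), by
      linear_combination (C_mul.symm.trans (by rw [inv_mul_cancel₀ hc, C_1]) : C c⁻¹ * C c = 1)⟩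
  rw [separable_def, hder]
  exact hcoprime.pow_right.neg_right

lemma sub_pow_mul_one_add_eq_pow (p : ℕ) [ExpChar F p] {N : ℕ} (hk : k + 1 = p ^ N)
    {c T B : F} (hT : T ^ (k + 1) + T ^ k = c) (hB : B ^ (k + 1) + B ^ k = c) (hTB : T ≠ B) :
    (T - B) ^ k * (1 + B) = T ^ k := by
  have hfrob : (T - B) ^ (k + 1) = T ^ (k + 1) - B ^ (k + 1) := hk ▸ sub_pow_expChar_pow T B N
  have h : (T - B) * ((T - B) ^ k * (1 + B) - T ^ k) = 0 := by
    linear_combination (1 + B) * hfrob + B * hT - B * hB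
  exact sub_eq_zero.mp ((mul_eq_zero.mp h).resolve_left (sub_ne_zero.mpr hTB))

end Field

lemma isSeparable_of_pow_succ_add_pow_eq {L Ω : Type*} [Field L] [Field Ω] [Algebra L Ω]
    {k : ℕ} (hk : ((k + 1 : ℕ) : Ω) = 0) {c : L} (hc : c ≠ 0) {T : Ω}
    (hT : T ^ (k + 1) + T ^ k = algebraMap L Ω c) : IsSeparable L T := by
  have hkL : ((k + 1 : ℕ) : L) = 0 :=
    (algebraMap L Ω).injective (by rw [map_natCast, hk, map_zero])
  refine (separable_X_pow_succ_add_X_pow_sub_C hkL hc).of_dvd (minpoly.dvd _ _ ?_)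
  simp [hT]

lemma eq_of_mul_add_mul_eq {q : ℕ} {a : ℤ} (hqa : IsCoprime (q : ℤ) a) {i j : ℕ} (hi : i < q)
    (hj : j < q) {z z' : ℤ} (h : q * z + i * a = q * z' + j * a) : i = j := by
  have hdvd : (q : ℤ) ∣ (i - j) * a := ⟨z' - z, by linear_combination h⟩
  have := Int.eq_zero_of_abs_lt_dvd (hqa.dvd_of_dvd_mul_right hdvd) (by rw [abs_lt]; omega)
  omega

lemma Nat.exists_mul_add_one_eq_mul {q R : ℕ} (hq : q ≠ 0) (hqR : q.Coprime R) :
    ∃ n M, n * R + 1 = q * M := by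
  obtain ⟨m, -, hm⟩ := Nat.exists_mul_mod_eq_of_coprime (q - 1) hqR.symm hq
  rw [Nat.mod_eq_of_lt (show q - 1 < q by omega)] at hm
  refine ⟨m, R * m / q + 1, ?_⟩
  have := Nat.div_add_mod (R * m) q
  rw [hm] at this
  rw [mul_add, mul_one, mul_comm m R]
  omega

namespace AddValuation

section Ring

variable {R Γ₀ : Type*} [Ring R] [LinearOrderedAddCommMonoidWithTop Γ₀] (v : AddValuation R Γ₀)

lemma map_sum_eq_inf {ι : Type*} {s : Finset ι} {f : ι → R}
    (hf : ∀ i ∈ s, ∀ j ∈ s, f i ≠ 0 → f j ≠ 0 → v (f i) = v (f j) → i = j) :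
    v (∑ i ∈ s, f i) = s.inf fun i => v (f i) := by
  classical
  refine le_antisymm ?_ (v.map_le_sum fun i hi => Finset.inf_le hi)
  rcases s.eq_empty_or_nonempty with rfl | hs
  · simp
  obtain ⟨i₀, hi₀, hmin⟩ := s.exists_mem_eq_inf hs fun i => v (f i)
  rcases eq_or_ne (v (f i₀)) ⊤ with htop | htop
  · rw [hmin, htop]
    exact le_top
  have hf₀ : f i₀ ≠ 0 := fun h => htop (h ▸ v.map_zero)
  have hlt : v (f i₀) < v (∑ i ∈ s.erase i₀, f i) := by
    refine v.map_lt_sum htop fun i hi => ?_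
    have hle : v (f i₀) ≤ v (f i) := hmin ▸ Finset.inf_le (Finset.mem_of_mem_erase hi)
    refine hle.lt_of_ne fun heq => ?_
    have hfi : f i ≠ 0 := fun h => htop (heq.trans (h ▸ v.map_zero))
    exact Finset.ne_of_mem_erase hi (hf i (Finset.mem_of_mem_erase hi) i₀ hi₀ hfi hf₀ heq.symm)
  rw [← Finset.add_sum_erase s f hi₀, v.map_add_eq_of_lt_left hlt, hmin]

lemma map_natCast_nonneg (n : ℕ) : 0 ≤ v (n : R) := by
  induction n with
  | zero => simp
  | succ n ih => rw [Nat.cast_succ]; exact v.map_le_add ih v.map_one.ge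

lemma map_natCast_eq_zero {p : ℕ} [Fact p.Prime] [CharP R p] {n : ℕ} (hn : ¬ p ∣ n) :
    v (n : R) = 0 := by
  obtain ⟨m, -, hm⟩ := Nat.exists_mul_mod_eq_one_of_coprime
    (Nat.coprime_comm.mp ((Fact.out : p.Prime).coprime_iff_not_dvd.mpr hn))
    (Fact.out : p.Prime).one_lt
  have hunit : (n : R) * m = 1 := by
    rw [← Nat.cast_mul, CharP.natCast_eq_natCast_mod R p, hm, Nat.cast_one]
  have hsum : v (n : R) + v (m : R) = 0 := by rw [← v.map_mul, hunit, v.map_one]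
  exact le_antisymm (hsum ▸ le_add_of_nonneg_right (v.map_natCast_nonneg m))
    (v.map_natCast_nonneg n)

end Ring

section CommRing

variable {R Γ₀ : Type*} [CommRing R] [LinearOrderedAddCommMonoidWithTop Γ₀]
  (v : AddValuation R Γ₀) {u : R}

lemma exists_one_sub_pow_sub_one_eq (hu : 0 ≤ v u) (i : ℕ) :
    ∃ g, 0 ≤ v g ∧ (1 - u) ^ i - 1 = u * (u * g - i) := by
  induction i with
  | zero => exact ⟨0, by simp, by simp⟩
  | succ i ih =>
    obtain ⟨g, hg, hgi⟩ := ih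
    refine ⟨g - u * g + i, v.map_le_add (v.map_le_sub hg ?_) (v.map_natCast_nonneg i), ?_⟩
    · rw [v.map_mul]
      exact add_nonneg hu hg
    · rw [pow_succ, show (1 - u) ^ i = u * (u * g - i) + 1 by rw [← hgi]; ring]
      push_cast
      ring

lemma le_map_one_sub_pow_sub_one (hu : 0 ≤ v u) (i : ℕ) : v u ≤ v ((1 - u) ^ i - 1) := by
  obtain ⟨g, hg, hgi⟩ := v.exists_one_sub_pow_sub_one_eq hu i
  rw [hgi, v.map_mul]
  exact le_add_of_nonneg_right (v.map_le_sub (by rw [v.map_mul]; exact add_nonneg hu hg)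
    (v.map_natCast_nonneg i))

lemma map_one_sub_pow_sub_one {p : ℕ} [Fact p.Prime] [CharP R p] (hu : 0 < v u) {i : ℕ}
    (hi : ¬ p ∣ i) : v ((1 - u) ^ i - 1) = v u := by
  obtain ⟨g, hg, hgi⟩ := v.exists_one_sub_pow_sub_one_eq hu.le i
  have hlt : v (i : R) < v (u * g) := by
    rw [v.map_natCast_eq_zero hi, v.map_mul]
    exact hu.trans_le (le_add_of_nonneg_right hg)
  rw [hgi, v.map_mul, v.map_sub_eq_of_lt_right hlt, v.map_natCast_eq_zero hi, add_zero]

end CommRing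

section Roots

variable {Ω : Type*} [Field Ω] (v : AddValuation Ω (WithTop ℚ))

lemma map_pow_of_eq_coe {x : Ω} {r : ℚ} (hx : v x = r) (n : ℕ) :
    v (x ^ n) = ((n * r : ℚ) : WithTop ℚ) := by
  rw [v.map_pow, hx, ← WithTop.coe_nsmul, nsmul_eq_mul]

variable {k : ℕ} {a : ℚ} {c : Ω} (hc : v c = a) (ha : a < 0)
include hc ha

lemma map_eq_of_pow_succ_add_pow_eq {X : Ω} (hX : X ^ (k + 1) + X ^ k = c) :
    v X = ((a / (k + 1) : ℚ) : WithTop ℚ) := by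
  have hneg : v X < 0 := by
    by_contra! h
    have : (0 : WithTop ℚ) ≤ v c := by
      rw [← hX]
      exact v.map_le_add (v.map_pow X _ ▸ nsmul_nonneg h _) (v.map_pow X _ ▸ nsmul_nonneg h _)
    exact ha.not_ge (by exact_mod_cast hc ▸ this)
  obtain ⟨r, hr⟩ := WithTop.ne_top_iff_exists.mp hneg.ne_top
  have hr0 : r < 0 := by exact_mod_cast hr ▸ hneg
  have hlt : v (X ^ (k + 1)) < v (X ^ k) := by
    rw [v.map_pow_of_eq_coe hr.symm, v.map_pow_of_eq_coe hr.symm, WithTop.coe_lt_coe]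
    push_cast
    linarith
  have hvc := congrArg v hX
  rw [v.map_add_eq_of_lt_left hlt, hc, v.map_pow_of_eq_coe hr.symm, WithTop.coe_eq_coe] at hvc
  rw [← hr, WithTop.coe_eq_coe, ← hvc]
  push_cast
  field_simp

lemma map_sub_div_eq_of_roots (p : ℕ) [ExpChar Ω p] {N : ℕ} (hk : k + 1 = p ^ N) {T B : Ω}
    (hT : T ^ (k + 1) + T ^ k = c) (hB : B ^ (k + 1) + B ^ k = c) (hTB : T ≠ B) :
    v ((T - B) / T) = ((-a / (k * (k + 1)) : ℚ) : WithTop ℚ) := by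
  have hvT := v.map_eq_of_pow_succ_add_pow_eq hc ha hT
  have hvB := v.map_eq_of_pow_succ_add_pow_eq hc ha hB
  have hT0 : T ≠ 0 := fun h => by simp [h] at hvT
  have h1B : v (1 + B) = v B := by
    refine v.map_add_eq_of_lt_right ?_
    rw [hvB, v.map_one]
    exact_mod_cast div_neg_of_neg_of_pos ha (by positivity)
  have hu : ((T - B) / T) ^ k * (1 + B) = 1 := by
    rw [div_pow, div_mul_eq_mul_div, sub_pow_mul_one_add_eq_pow p hk hT hB hTB,
      div_self (pow_ne_zero _ hT0)]
  obtain ⟨r, hr⟩ := WithTop.ne_top_iff_exists.mp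
    (v.ne_top_iff.mpr (div_ne_zero (sub_ne_zero.mpr hTB) hT0))
  have hsum := congrArg v hu
  rw [v.map_mul, h1B, hvB, v.map_pow_of_eq_coe hr.symm, v.map_one, ← WithTop.coe_add,
    ← WithTop.coe_zero, WithTop.coe_eq_coe] at hsum
  have hk0 : (k : ℚ) ≠ 0 := by
    rintro hk0
    rw [hk0, zero_mul, zero_add, div_eq_zero_iff] at hsum
    exact ha.ne (hsum.resolve_right (by positivity))
  field_simp at hsum
  rw [← hr, WithTop.coe_eq_coe, eq_div_iff (by positivity)]
  linear_combination hsum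

end Roots

end AddValuation

section Ramified

variable {K Ω : Type*} [Field K] [Field Ω] [Algebra K Ω] {v : AddValuation Ω (WithTop ℚ)}
  (hvK : ∀ c : K, c ≠ 0 → ∃ z : ℤ, v (algebraMap K Ω c) = ((z : ℚ) : WithTop ℚ))
  {q : ℕ} {a : ℤ} {T : Ω} (hq : q ≠ 0) (hvT : v T = ((a / q : ℚ) : WithTop ℚ))
include hvK hq hvT

lemma exists_map_algebraMap_mul_pow {c : K} (hc : c ≠ 0) (i : ℕ) :
    ∃ z : ℤ, v (algebraMap K Ω c * T ^ i) = ((((q * z + i * a : ℤ) : ℚ) / q : ℚ) : WithTop ℚ) := by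
  obtain ⟨z, hz⟩ := hvK c hc
  refine ⟨z, ?_⟩
  rw [v.map_mul, hz, v.map_pow_of_eq_coe hvT, ← WithTop.coe_add, WithTop.coe_eq_coe]
  push_cast
  field_simp

variable (hqa : IsCoprime (q : ℤ) a)
include hqa

lemma map_aeval_eq_inf {P : K[X]} (hP : P.natDegree < q) :
    v (aeval T P) = (Finset.range q).inf fun i => v (algebraMap K Ω (P.coeff i) * T ^ i) := by
  rw [aeval_eq_sum_range' hP]
  simp only [Algebra.smul_def]
  refine v.map_sum_eq_inf fun i hi j hj hci hcj hij => ?_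
  obtain ⟨zi, hzi⟩ := exists_map_algebraMap_mul_pow hvK hq hvT
    ((_root_.map_ne_zero _).mp (left_ne_zero_of_mul hci)) i
  obtain ⟨zj, hzj⟩ := exists_map_algebraMap_mul_pow hvK hq hvT
    ((_root_.map_ne_zero _).mp (left_ne_zero_of_mul hcj)) j
  rw [hzi, hzj, WithTop.coe_eq_coe, div_left_inj' (by exact_mod_cast hq), Int.cast_inj] at hij
  exact eq_of_mul_add_mul_eq hqa (Finset.mem_range.mp hi) (Finset.mem_range.mp hj) hij

lemma eq_zero_of_aeval_eq_zero {P : K[X]} (hP : P.natDegree < q) (h : aeval T P = 0) :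
    P = 0 := by
  have hT : T ≠ 0 := fun h0 => by simp [h0] at hvT
  have hinf := map_aeval_eq_inf hvK hq hvT hqa hP
  rw [h, v.map_zero, eq_comm, Finset.inf_eq_top_iff] at hinf
  ext i
  rw [coeff_zero]
  by_cases hi : i < q
  · simpa [hT] using v.top_iff.mp (hinf i (Finset.mem_range.mpr hi))
  · exact coeff_eq_zero_of_natDegree_lt (by omega)

lemma one_div_le_map_algebraMap_coeff_mul_pow {P : K[X]} (hP : P.natDegree < q)
    (hx : 0 ≤ v (aeval T P)) {i : ℕ} (hi0 : i ≠ 0) (hiq : i < q) :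
    ((1 / q : ℚ) : WithTop ℚ) ≤ v (algebraMap K Ω (P.coeff i) * T ^ i) := by
  by_cases hc : P.coeff i = 0
  · simp [hc]
  obtain ⟨z, hz⟩ := exists_map_algebraMap_mul_pow hvK hq hvT hc i
  have hnonneg : (0 : WithTop ℚ) ≤ v (algebraMap K Ω (P.coeff i) * T ^ i) :=
    (map_aeval_eq_inf hvK hq hvT hqa hP ▸ hx).trans (Finset.inf_le (Finset.mem_range.mpr hiq))
  have hne : q * z + i * a ≠ 0 := fun h0 =>
    hi0 (eq_of_mul_add_mul_eq hqa hiq (Nat.pos_of_ne_zero hq) (z' := 0) (by simpa using h0))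
  have hqpos : (0 : ℚ) < q := by exact_mod_cast Nat.pos_of_ne_zero hq
  rw [hz, WithTop.coe_nonneg, le_div_iff₀ hqpos, zero_mul] at hnonneg
  rw [hz, WithTop.coe_le_coe]
  refine div_le_div_of_nonneg_right ?_ hqpos.le
  exact_mod_cast lt_of_le_of_ne (by exact_mod_cast hnonneg) (Ne.symm hne)

lemma le_map_aeval_mul_one_sub_sub_aeval {P : K[X]} (hP : P.natDegree < q)
    (hx : 0 ≤ v (aeval T P)) {u : Ω} (hu : 0 ≤ v u) :
    ((1 / q : ℚ) : WithTop ℚ) + v u ≤ v (aeval (T * (1 - u)) P - aeval T P) := by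
  rw [aeval_eq_sum_range' hP, aeval_eq_sum_range' hP, ← Finset.sum_sub_distrib]
  refine v.map_le_sum fun i hi => ?_
  rcases eq_or_ne i 0 with rfl | hi0
  · simp
  rw [Algebra.smul_def, Algebra.smul_def, mul_pow,
    show ∀ c x y : Ω, c * (x * y) - c * x = c * x * (y - 1) from fun _ _ _ => by ring, v.map_mul]
  exact add_le_add (one_div_le_map_algebraMap_coeff_mul_pow hvK hq hvT hqa hP hx hi0
    (Finset.mem_range.mp hi)) (v.le_map_one_sub_pow_sub_one hu i)

end Ramified

section ArtinSchreier

variable {K Ω : Type*} [Field K] [Field Ω] [Algebra K Ω] {v : AddValuation Ω (WithTop ℚ)}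
  {t : K} (hvt : v (algebraMap K Ω t) = ((-1 : ℚ) : WithTop ℚ)) {R k : ℕ} (hR : 0 < R)
  {T : Ω} (hT : T ^ (k + 1) + T ^ k = algebraMap K Ω t ^ R)

include hvt hR hT in
lemma map_eq_neg_div_of_pow_succ_add_pow_eq :
    v T = ((((-R : ℤ) : ℚ) / ((k + 1 : ℕ) : ℚ) : ℚ) : WithTop ℚ) := by
  rw [v.map_eq_of_pow_succ_add_pow_eq (v.map_pow_of_eq_coe hvt R) (by simpa using hR) hT]
  push_cast
  ring_nf

include hT in
lemma isIntegral_of_pow_succ_add_pow_eq : IsIntegral K T := by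
  refine ⟨X ^ (k + 1) + X ^ k - C (t ^ R), ?_, ?_⟩
  · monicity!
  · simp [← aeval_def, hT]

include hT in
lemma algHom_gen_pow_succ_add_pow_eq (σ : K⟮T⟯ →ₐ[K] Ω) :
    σ (AdjoinSimple.gen K T) ^ (k + 1) + σ (AdjoinSimple.gen K T) ^ k =
      algebraMap K Ω t ^ R := by
  have hgen : aeval (AdjoinSimple.gen K T) (X ^ (k + 1) + X ^ k - C (t ^ R)) = 0 :=
    Subtype.ext (by simp [hT])
  have := congrArg σ hgen
  rw [← aeval_algHom_apply, map_zero] at this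
  simpa [sub_eq_zero] using this

include hvt hR hT in
lemma exists_algHom_gen_eq_mul_one_sub (p : ℕ) [ExpChar Ω p] {N : ℕ} (hk : k + 1 = p ^ N)
    {σ : K⟮T⟯ →ₐ[K] Ω} (hσ : σ ≠ K⟮T⟯.val) :
    ∃ u, σ (AdjoinSimple.gen K T) = T * (1 - u) ∧
      v u = ((R / (k * (k + 1)) : ℚ) : WithTop ℚ) := by
  have hne : σ (AdjoinSimple.gen K T) ≠ T := fun h =>
    hσ ((adjoin.powerBasis (isIntegral_of_pow_succ_add_pow_eq hT)).algHom_ext (by simpa using h))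
  have hu := v.map_sub_div_eq_of_roots (v.map_pow_of_eq_coe hvt R) (by simpa using hR) p hk hT
    (algHom_gen_pow_succ_add_pow_eq hT σ) hne.symm
  have hT0 : T ≠ 0 := fun h => by simp [h] at hu
  refine ⟨(T - σ (AdjoinSimple.gen K T)) / T, by field_simp; ring, ?_⟩
  rw [hu]
  ring_nf

include hvt hR hT in
lemma map_algebraMap_inv_pow_mul_pow {n M : ℕ} (hnM : n * R + 1 = (k + 1) * M) :
    v (algebraMap K Ω (t ^ M)⁻¹ * T ^ n) = ((1 / (k + 1 : ℕ) : ℚ) : WithTop ℚ) := by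
  have hnM' : (n * R + 1 : ℚ) = (k + 1) * M := by exact_mod_cast hnM
  rw [v.map_mul, map_inv₀, v.map_inv, map_pow, v.map_pow_of_eq_coe hvt,
    v.map_pow_of_eq_coe (map_eq_neg_div_of_pow_succ_add_pow_eq hvt hR hT),
    ← WithTop.LinearOrderedAddCommGroup.coe_neg, ← WithTop.coe_add, WithTop.coe_eq_coe]
  push_cast
  field_simp
  linarith

include hvt hR hT in
lemma exists_map_algHom_sub_eq (hkR : (k + 1).Coprime R) (p : ℕ) [Fact p.Prime] [CharP Ω p]
    {N : ℕ} (hN : 0 < N) (hk : k + 1 = p ^ N) {σ : K⟮T⟯ →ₐ[K] Ω} (hσ : σ ≠ K⟮T⟯.val) :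
    ∃ x : K⟮T⟯, 0 ≤ v (x : Ω) ∧ v (σ x - x) = (((R / k + 1) / (k + 1) : ℚ) : WithTop ℚ) := by
  obtain ⟨n, M, hnM⟩ := Nat.exists_mul_add_one_eq_mul (Nat.succ_ne_zero k) hkR
  have hk0 : 0 < k := by
    have := Nat.one_lt_pow hN.ne' (Fact.out : p.Prime).one_lt
    omega
  have hpn : ¬ p ∣ n := fun hpn => (Fact.out : p.Prime).one_lt.ne'
    (Nat.dvd_one.mp ((Nat.dvd_add_right (hpn.mul_right R)).mp
      (hnM ▸ (hk ▸ dvd_pow_self p hN.ne' : p ∣ k + 1).mul_right M)))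
  obtain ⟨u, hB, hu⟩ := exists_algHom_gen_eq_mul_one_sub hvt hR hT p hk hσ
  have hx := map_algebraMap_inv_pow_mul_pow hvt hR hT hnM
  have hcoe : ((algebraMap K K⟮T⟯ (t ^ M)⁻¹ * AdjoinSimple.gen K T ^ n : K⟮T⟯) : Ω) =
      algebraMap K Ω (t ^ M)⁻¹ * T ^ n := rfl
  refine ⟨algebraMap K K⟮T⟯ (t ^ M)⁻¹ * AdjoinSimple.gen K T ^ n, ?_, ?_⟩
  · rw [hcoe, hx]
    exact WithTop.coe_nonneg.mpr (by positivity)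
  rw [hcoe, map_mul, map_pow, AlgHom.commutes, hB, mul_pow, ← mul_assoc, ← mul_sub_one,
    v.map_mul, hx, v.map_one_sub_pow_sub_one (hu ▸ WithTop.coe_pos.mpr (by positivity)) hpn, hu,
    ← WithTop.coe_add, WithTop.coe_eq_coe, ← div_div]
  push_cast
  ring

variable (hvK : ∀ c : K, c ≠ 0 → ∃ z : ℤ, v (algebraMap K Ω c) = ((z : ℚ) : WithTop ℚ))
  (hkR : (k + 1).Coprime R)
include hvK hvt hR hT hkR

lemma natDegree_minpoly_of_pow_succ_add_pow_eq : (minpoly K T).natDegree = k + 1 := by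
  have hint := isIntegral_of_pow_succ_add_pow_eq hT
  refine le_antisymm ?_ (not_lt.mp fun hlt => minpoly.ne_zero hint ?_)
  · have hf : (X ^ (k + 1) + X ^ k - C (t ^ R) : K[X]).natDegree = k + 1 := by compute_degree!
    exact hf ▸ natDegree_le_natDegree (minpoly.min K T (by monicity!) (by simp [hT]))
  · exact eq_zero_of_aeval_eq_zero hvK k.succ_ne_zero
      (map_eq_neg_div_of_pow_succ_add_pow_eq hvt hR hT)
      (Nat.isCoprime_iff_coprime.mpr hkR).neg_right hlt (minpoly.aeval K T)

lemma le_map_algHom_sub (p : ℕ) [ExpChar Ω p] {N : ℕ} (hk : k + 1 = p ^ N)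
    {σ : K⟮T⟯ →ₐ[K] Ω} (hσ : σ ≠ K⟮T⟯.val) {x : K⟮T⟯} (hx : 0 ≤ v (x : Ω)) :
    (((R / k + 1) / (k + 1) : ℚ) : WithTop ℚ) ≤ v (σ x - x) := by
  obtain ⟨P, hP, rfl⟩ :=
    (adjoin.powerBasis (isIntegral_of_pow_succ_add_pow_eq hT)).exists_eq_aeval x
  rw [adjoin.powerBasis_dim, natDegree_minpoly_of_pow_succ_add_pow_eq hvt hR hT hvK hkR] at hP
  rw [adjoin.powerBasis_gen, AdjoinSimple.coe_aeval_gen_apply] at hx ⊢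
  obtain ⟨u, hB, hu⟩ := exists_algHom_gen_eq_mul_one_sub hvt hR hT p hk hσ
  rw [← aeval_algHom_apply, hB]
  calc (((R / k + 1) / (k + 1) : ℚ) : WithTop ℚ)
      = ((1 / (k + 1 : ℕ) : ℚ) : WithTop ℚ) + v u := by
        rw [hu, ← WithTop.coe_add, WithTop.coe_eq_coe, ← div_div]
        push_cast
        ring
    _ ≤ v (aeval (T * (1 - u)) P - aeval T P) :=
        le_map_aeval_mul_one_sub_sub_aeval hvK (Nat.succ_ne_zero k : k + 1 ≠ 0)
          (map_eq_neg_div_of_pow_succ_add_pow_eq hvt hR hT)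
          (Nat.isCoprime_iff_coprime.mpr hkR).neg_right hP hx
          (hu ▸ WithTop.coe_nonneg.mpr (by positivity))

end ArtinSchreier

theorem K_R_artinSchreier_degree_and_unique_break_general
    (p : ℕ) (hp : p.Prime) (K Ω : Type*) [Field K] [Field Ω] [Algebra K Ω]
    [CharP Ω p]
    (v : AddValuation Ω (WithTop ℚ))
    (hvK : ∀ c : K, c ≠ 0 → ∃ z : ℤ, v (algebraMap K Ω c) = ((z : ℚ) : WithTop ℚ))
    (t : K) (hvt : v (algebraMap K Ω t) = ((-1 : ℚ) : WithTop ℚ))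
    (R : ℕ) (hR : 0 < R) (hpR : ¬ p ∣ R)
    (N : ℕ) (hN : 0 < N) (q : ℕ) (hq : q = p ^ N)
    (T : Ω) (hT : T ^ q + T ^ (q - 1) = algebraMap K Ω t ^ R) (hT0 : T ≠ 0)
    (s : Ω) (hs : s ^ (q - 1) = algebraMap K Ω t ^ R)
    (s' : Ω) :
    -- (1) the Artin–Schreier equation for θ = s/T
    (s / T) ^ q - s / T = s ∧
    -- (2) K_R(t^{1/(q-1)}) is separable over K(t^{1/(q-1)})
    Algebra.IsSeparable (adjoin K {s'}) (adjoin (adjoin K {s'}) {T}) ∧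
    -- (3) [K_R : K] = q
    Module.finrank K (adjoin K {T}) = q ∧
    -- (4) unique upper ramification break R/(q-1)
    (∀ σ : (adjoin K {T}) →ₐ[K] Ω, σ ≠ (adjoin K {T}).val →
      (∀ x : adjoin K {T}, (0 : WithTop ℚ) ≤ v (x : Ω) →
        (((R / (q - 1) + 1) / q : ℚ) : WithTop ℚ) ≤ v (σ x - (x : Ω))) ∧
      (∃ x : adjoin K {T}, (0 : WithTop ℚ) ≤ v (x : Ω) ∧
        v (σ x - (x : Ω)) = (((R / (q - 1) + 1) / q : ℚ) : WithTop ℚ))) := by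
  have : Fact p.Prime := ⟨hp⟩
  obtain ⟨k, rfl⟩ : ∃ k, q = k + 1 := ⟨q - 1, by have := Nat.one_le_pow N p hp.pos; omega⟩
  rw [Nat.add_sub_cancel] at hT hs
  have hkR : (k + 1).Coprime R := hq ▸ Nat.Coprime.pow_left N (hp.coprime_iff_not_dvd.mpr hpR)
  have ht : t ≠ 0 := fun h => WithTop.top_ne_coe (by rwa [h, map_zero, v.map_zero] at hvt)
  have hkΩ : ((k + 1 : ℕ) : Ω) = 0 := by
    rw [hq, Nat.cast_pow, CharP.cast_eq_zero, zero_pow hN.ne']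
  have hbreak : (R / ((k + 1 : ℕ) - 1 : ℚ) + 1) / (k + 1 : ℕ) = (R / k + 1) / (k + 1) := by
    push_cast
    ring
  refine ⟨div_pow_succ_sub_div hT0 (hs.trans hT.symm), ?_, ?_,
    fun σ hσ => ⟨fun x hx => ?_, ?_⟩⟩
  · refine (isSeparable_adjoin_simple_iff_isSeparable _ _).mpr
      (isSeparable_of_pow_succ_add_pow_eq hkΩ (c := algebraMap K (adjoin K {s'}) t ^ R)
        (pow_ne_zero _ ((_root_.map_ne_zero _).mpr ht)) ?_)
    rw [map_pow, ← IsScalarTower.algebraMap_apply, hT]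
  · rw [adjoin.finrank (isIntegral_of_pow_succ_add_pow_eq hT),
      natDegree_minpoly_of_pow_succ_add_pow_eq hvt hR hT hvK hkR]
  · rw [hbreak]
    exact le_map_algHom_sub hvt hR hT hvK hkR p hq hσ hx
  · rw [hbreak]
    exact exists_map_algHom_sub_eq hvt hR hT hkR p hN hq hσ

/-- Let `K` be a (complete) discrete valuation field of equal
characteristic `p > 0`, realized as a subfield of a fixed algebraically closed field `Ω`
carrying an additive valuation `v` (with rational values) extending the normalized valuation
of `K` (so `v(K×) = ℤ`), and let `t ∈ K` with `v(t) = -1`.  Let `R` be a positive integer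
prime to `p`, `q = p^N` a power of `p`, and `K_R = K(T)` where `T^q + T^{q-1} = t^R`.
Then, for `s = t^{R/(q-1)}` (an element with `s^{q-1} = t^R`), the element `θ = s/T`
satisfies the Artin–Schreier equation `θ^q - θ = s`; `K_R(t^{1/(q-1)})` is separable over
`K(t^{1/(q-1)})`; `[K_R : K] = q`; and `K_R/K` has a unique upper ramification break equal
to `R/(q-1)` — expressed (for the totally ramified monogenic extension `K_R = K(T)`, with
ramification index `q`, lower break = upper break for a single break) by the condition that
every `K`-embedding `σ ≠ incl` of `K_R` into `Ω` satisfies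
`v(σx - x) ≥ (R/(q-1) + 1)/q` on the valuation ring of `K_R`, with equality attained. -/
theorem K_R_artinSchreier_degree_and_unique_break
    (p : ℕ) (hp : p.Prime) (K Ω : Type*) [Field K] [Field Ω] [Algebra K Ω]
    [CharP Ω p] [IsAlgClosed Ω]
    (v : AddValuation Ω (WithTop ℚ))
    (hvK : ∀ c : K, c ≠ 0 → ∃ z : ℤ, v (algebraMap K Ω c) = ((z : ℚ) : WithTop ℚ))
    (t : K) (hvt : v (algebraMap K Ω t) = ((-1 : ℚ) : WithTop ℚ))
    (R : ℕ) (hR : 0 < R) (hpR : ¬ p ∣ R)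
    (N : ℕ) (hN : 0 < N) (q : ℕ) (hq : q = p ^ N)
    (T : Ω) (hT : T ^ q + T ^ (q - 1) = algebraMap K Ω t ^ R) (hT0 : T ≠ 0)
    (s : Ω) (hs : s ^ (q - 1) = algebraMap K Ω t ^ R)
    (s' : Ω) (hs' : s' ^ (q - 1) = algebraMap K Ω t) :
    -- (1) the Artin–Schreier equation for θ = s/T
    (s / T) ^ q - s / T = s ∧
    -- (2) K_R(t^{1/(q-1)}) is separable over K(t^{1/(q-1)})
    Algebra.IsSeparable (adjoin K {s'}) (adjoin (adjoin K {s'}) {T}) ∧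
    -- (3) [K_R : K] = q
    Module.finrank K (adjoin K {T}) = q ∧
    -- (4) unique upper ramification break R/(q-1)
    (∀ σ : (adjoin K {T}) →ₐ[K] Ω, σ ≠ (adjoin K {T}).val →
      (∀ x : adjoin K {T}, (0 : WithTop ℚ) ≤ v (x : Ω) →
        (((R / (q - 1) + 1) / q : ℚ) : WithTop ℚ) ≤ v (σ x - (x : Ω))) ∧
      (∃ x : adjoin K {T}, (0 : WithTop ℚ) ≤ v (x : Ω) ∧
        v (σ x - (x : Ω)) = (((R / (q - 1) + 1) / q : ℚ) : WithTop ℚ))) :=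
  K_R_artinSchreier_degree_and_unique_break_general p hp K Ω v hvK t hvt R hR hpR N hN q hq T hT hT0
    s hs s'
end

section
/- Let A = (a_{i,j}) ∈ UT_n(K) and for 1 ≤ i < j ≤ n set m_{i,j} = -v_K(a_{i,j}), m_λ = Σ_{u} m_{λ_u, λ_{u+1}} for a partition λ of (i,j), and μ_{i,j} = max over partitions λ ∈ Λ_{i,j} of m_λ. Then μ_{i,j} ≥ μ_{i,l} + μ_{l,j} for all i < l < j, μ_{i,j} ≥ m_{i,j}, and the entries a*_{i,j} of A⁻¹ satisfy v_K(a*_{i,j}) ≥ -μ_{i,j}. -/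
/-!
`μ` is a longest-path value: `μ_{i,j}` is the largest total weight of a chain from `i` to `j`
when the step `k → l` weighs `m_{k,l}`. Superadditivity is concatenation of chains, which by
induction on the length of the first chain reduces to prepending one step,
`m_{i,k} + μ_{k,j} ≤ μ_{i,j}` for `i < k`. For the inverse `B`, row `i` of `A * B = 1` reads
`b_{i,j} = δ_{i,j} - Σ_{l > i} a_{i,l} b_{l,j}`; by downward induction on `i` and the
ultrametric inequality, `v(b_{i,j}) ≥ min_{l > i} (v(a_{i,l}) - μ_{l,j}) ≥ -μ_{i,j}`, again by
prepending a step.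
-/

/-- Negation, from `ℤ ∪ {+∞}` to `ℤ ∪ {-∞}`. -/
def negT (t : WithTop ℤ) : WithBot ℤ :=
  WithTop.recTopCoe ⊥ (fun z : ℤ => ((-z : ℤ) : WithBot ℤ)) t

/-- Negation, from `ℤ ∪ {-∞}` to `ℤ ∪ {+∞}`. -/
def negB (t : WithBot ℤ) : WithTop ℤ :=
  WithBot.recBotCoe ⊤ (fun z : ℤ => ((-z : ℤ) : WithTop ℤ)) t

/-- `μ_{i,j} = max_{λ ∈ Λ_{i,j}} Σ_u m_{λ_u,λ_{u+1}}` where `m_{i,j} = -v_K(a_{i,j})`,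
the maximum being over all strictly increasing sequences from `i` to `j` (partitions,
encoded as strictly monotone functions `f : Fin (s+1) → Fin n` with `f 0 = i`,
`f s = j`). -/
noncomputable def muOf {n : ℕ} {K : Type*} [Field K] (v : AddValuation K (WithTop ℤ))
    (A : Matrix (Fin n) (Fin n) K) (i j : Fin n) : WithBot ℤ :=
  (Finset.range (n + 1)).sup fun s =>
    (Finset.univ.filter
        (fun f : Fin (s + 1) → Fin n =>
          (∀ a b : Fin (s + 1), a < b → f a < f b) ∧ f 0 = i ∧ f (Fin.last s) = j)).sup
      fun f => ∑ u : Fin s, negT (v (A (f u.castSucc) (f u.succ)))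

@[simp]
lemma negB_negT (t : WithTop ℤ) : negB (negT t) = t := by
  induction t using WithTop.recTopCoe <;> simp [negT, negB]

@[simp]
lemma negB_zero : negB 0 = 0 := by
  simp [negB, ← WithBot.coe_zero]

lemma negB_antitone : Antitone negB := by
  intro a b hab
  induction a using WithBot.recBotCoe with
  | bot => simp [negB]
  | coe x =>
    induction b using WithBot.recBotCoe with
    | bot => simp at hab
    | coe y =>
      simp only [negB, WithBot.recBotCoe_coe, WithTop.coe_le_coe]
      exact neg_le_neg (WithBot.coe_le_coe.mp hab)

lemma negB_add (a b : WithBot ℤ) : negB (a + b) = negB a + negB b := by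
  induction a using WithBot.recBotCoe with
  | bot => simp [negB]
  | coe x =>
    induction b using WithBot.recBotCoe with
    | bot => simp [negB]
    | coe y =>
      simp only [negB, ← WithBot.coe_add, WithBot.recBotCoe_coe, ← WithTop.coe_add, neg_add]

section Partition

variable {n : ℕ} {K : Type*} [Field K] (v : AddValuation K (WithTop ℤ))
  (A : Matrix (Fin n) (Fin n) K)

def partitions (i j : Fin n) (s : ℕ) : Finset (Fin (s + 1) → Fin n) :=
  Finset.univ.filter fun f => StrictMono f ∧ f 0 = i ∧ f (Fin.last s) = j

lemma mem_partitions {i j : Fin n} {s : ℕ} {f : Fin (s + 1) → Fin n} :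
    f ∈ partitions i j s ↔ StrictMono f ∧ f 0 = i ∧ f (Fin.last s) = j := by
  simp [partitions]

/-- The weight `m_λ` of a partition `λ`. -/
noncomputable def partitionWeight {s : ℕ} (f : Fin (s + 1) → Fin n) : WithBot ℤ :=
  ∑ u : Fin s, negT (v (A (f u.castSucc) (f u.succ)))

lemma partitionWeight_succ {s : ℕ} (f : Fin (s + 2) → Fin n) :
    partitionWeight v A f = negT (v (A (f 0) (f 1))) + partitionWeight v A (Fin.tail f) := by
  simp only [partitionWeight, Fin.sum_univ_succ, Fin.tail, Fin.succ_castSucc]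
  rfl

lemma muOf_eq (i j : Fin n) :
    muOf v A i j =
      (Finset.range (n + 1)).sup fun s => (partitions i j s).sup (partitionWeight v A) :=
  rfl

lemma partitionWeight_le_muOf {i j : Fin n} {s : ℕ} {f : Fin (s + 1) → Fin n}
    (hf : StrictMono f) (h0 : f 0 = i) (hs : f (Fin.last s) = j) :
    partitionWeight v A f ≤ muOf v A i j := by
  have hsn : s + 1 ≤ n := by simpa using Fintype.card_le_of_injective f hf.injective
  exact (Finset.le_sup (mem_partitions.mpr ⟨hf, h0, hs⟩)).trans
    (Finset.le_sup (f := fun s => (partitions i j s).sup (partitionWeight v A))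
      (Finset.mem_range.mpr (by omega)))

lemma exists_partitionWeight_eq_muOf {i j : Fin n} (h : muOf v A i j ≠ ⊥) :
    ∃ (s : ℕ) (f : Fin (s + 1) → Fin n), StrictMono f ∧ f 0 = i ∧ f (Fin.last s) = j ∧
      partitionWeight v A f = muOf v A i j := by
  obtain ⟨s, -, hs⟩ := Finset.exists_mem_eq_sup (Finset.range (n + 1)) ⟨0, by simp⟩
    fun s => (partitions i j s).sup (partitionWeight v A)
  rw [muOf_eq, hs] at h ⊢
  obtain ⟨f, hf, hfs⟩ := Finset.exists_mem_eq_sup (partitions i j s)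
    (Finset.nonempty_iff_ne_empty.mpr fun he => h (by rw [he, Finset.sup_empty]))
    (partitionWeight v A)
  obtain ⟨hmono, h0, hlast⟩ := mem_partitions.mp hf
  exact ⟨s, f, hmono, h0, hlast, hfs.symm⟩

lemma zero_le_muOf_self (i : Fin n) : 0 ≤ muOf v A i i :=
  partitionWeight_le_muOf v A (f := fun _ : Fin 1 => i)
    (Fin.strictMono_iff_lt_succ.mpr fun u => u.elim0) rfl rfl

lemma negT_le_muOf {i j : Fin n} (hij : i < j) : negT (v (A i j)) ≤ muOf v A i j := by
  have hf : StrictMono ![i, j] := Fin.strictMono_iff_lt_succ.mpr fun u => by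
    fin_cases u; simpa using hij
  simpa [partitionWeight] using partitionWeight_le_muOf v A hf rfl rfl

lemma negT_add_muOf_le {i k j : Fin n} (hik : i < k) :
    negT (v (A i k)) + muOf v A k j ≤ muOf v A i j := by
  by_cases hbot : muOf v A k j = ⊥
  · simp [hbot]
  obtain ⟨s, g, hg, hg0, hgs, hgμ⟩ := exists_partitionWeight_eq_muOf v A hbot
  have hcons : StrictMono (Fin.cons i g : Fin (s + 2) → Fin n) := by
    rw [← Fin.insertNth_zero']
    exact Fin.strictMono_insertNth_zero hg i (hg0 ▸ hik)
  calc negT (v (A i k)) + muOf v A k j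
        = partitionWeight v A (Fin.cons i g : Fin (s + 2) → Fin n) := by
          rw [partitionWeight_succ, Fin.cons_zero, Fin.cons_one, Fin.tail_cons, hg0, hgμ]
    _ ≤ muOf v A i j :=
          partitionWeight_le_muOf v A hcons rfl (by simpa [← Fin.succ_last] using hgs)

lemma partitionWeight_add_muOf_le {l j : Fin n} :
    ∀ {s : ℕ} {f : Fin (s + 1) → Fin n}, StrictMono f → f (Fin.last s) = l →
      partitionWeight v A f + muOf v A l j ≤ muOf v A (f 0) j
  | 0, f, _, hl => by simp [partitionWeight, ← hl]
  | s + 1, f, hf, hl => by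
    have htail : StrictMono (Fin.tail f) := hf.comp Fin.strictMono_succ
    calc partitionWeight v A f + muOf v A l j
        = negT (v (A (f 0) (f 1))) + (partitionWeight v A (Fin.tail f) + muOf v A l j) := by
          rw [partitionWeight_succ, add_assoc]
      _ ≤ negT (v (A (f 0) (f 1))) + muOf v A (f 1) j :=
          add_le_add le_rfl (partitionWeight_add_muOf_le htail hl)
      _ ≤ muOf v A (f 0) j := negT_add_muOf_le v A (hf Fin.zero_lt_one)

lemma muOf_add_muOf_le (i l j : Fin n) : muOf v A i l + muOf v A l j ≤ muOf v A i j := by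
  by_cases hbot : muOf v A i l = ⊥
  · simp [hbot]
  obtain ⟨s, f, hf, hf0, hfs, hfμ⟩ := exists_partitionWeight_eq_muOf v A hbot
  simpa [hfμ, hf0] using partitionWeight_add_muOf_le v A (j := j) hf hfs

end Partition

lemma Matrix.mul_apply_eq_add_sum_Ioi {ι R : Type*} [Fintype ι] [LinearOrder ι]
    [LocallyFiniteOrderTop ι] [NonAssocSemiring R] {A : Matrix ι ι R}
    (hut : ∀ i j, j < i → A i j = 0) (hdiag : ∀ i, A i i = 1) (B : Matrix ι ι R)
    (i j : ι) : (A * B) i j = B i j + ∑ l ∈ Finset.Ioi i, A i l * B l j := by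
  have hlow : ∑ l, A i l * B l j = ∑ l ∈ Finset.Ici i, A i l * B l j :=
    (Finset.sum_subset (Finset.subset_univ _) fun l _ hl => by
      rw [hut i l (by simpa using hl), zero_mul]).symm
  rw [Matrix.mul_apply, hlow, ← Finset.add_sum_Ioi_eq_sum_Ici, hdiag, one_mul]

lemma negB_muOf_le_of_mul_eq_one {n : ℕ} {K : Type*} [Field K]
    (v : AddValuation K (WithTop ℤ)) {A B : Matrix (Fin n) (Fin n) K}
    (hut : ∀ i j, j < i → A i j = 0) (hdiag : ∀ i, A i i = 1) (hB : A * B = 1)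
    (i j : Fin n) : negB (muOf v A i j) ≤ v (B i j) := by
  induction i using WellFoundedGT.induction with
  | ind i ih =>
  have hrow :
      B i j = (1 : Matrix (Fin n) (Fin n) K) i j - ∑ l ∈ Finset.Ioi i, A i l * B l j := by
    rw [← hB, Matrix.mul_apply_eq_add_sum_Ioi hut hdiag, add_sub_cancel_right]
  rw [hrow]
  refine v.map_le_sub ?_ (v.map_le_sum fun l hl => ?_)
  · rcases eq_or_ne i j with rfl | hij
    · simpa using negB_antitone (zero_le_muOf_self v A i)
    · simp [hij]
  · have hil : i < l := Finset.mem_Ioi.mp hl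
    calc negB (muOf v A i j)
        ≤ negB (negT (v (A i l)) + muOf v A l j) := negB_antitone (negT_add_muOf_le v A hil)
      _ = v (A i l) + negB (muOf v A l j) := by rw [negB_add, negB_negT]
      _ ≤ v (A i l * B l j) := by rw [v.map_mul]; exact add_le_add le_rfl (ih l hil)

/-- Let `A ∈ UT_n(K)` be unipotent upper triangular, `m_{i,j} = -v_K(a_{i,j})`
and `μ_{i,j}` the maximum of `m_λ` over partitions `λ` of `(i,j)`.  Then
`μ_{i,j} ≥ μ_{i,l} + μ_{l,j}` for `i < l < j`, `μ_{i,j} ≥ m_{i,j}`, and the entries of `A⁻¹`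
satisfy `v_K(a*_{i,j}) ≥ -μ_{i,j}`. -/
theorem mu_superadditive_and_inv_bound {n : ℕ} {K : Type*} [Field K]
    (v : AddValuation K (WithTop ℤ)) (A : Matrix (Fin n) (Fin n) K)
    (hut : ∀ i j : Fin n, j < i → A i j = 0) (hdiag : ∀ i : Fin n, A i i = 1) :
    (∀ i l j : Fin n, i < l → l < j → muOf v A i l + muOf v A l j ≤ muOf v A i j) ∧
    (∀ i j : Fin n, i < j → negT (v (A i j)) ≤ muOf v A i j) ∧
    (∀ i j : Fin n, i < j → negB (muOf v A i j) ≤ v (A⁻¹ i j)) := by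
  have hdet : A.det = 1 := by
    rw [Matrix.det_of_isUpperTriangular (fun i j h => hut i j h)]
    simp [hdiag]
  refine ⟨fun i l j _ _ => muOf_add_muOf_le v A i l j, fun i j => negT_le_muOf v A,
    fun i j _ => negB_muOf_le_of_mul_eq_one v hut hdiag ?_ i j⟩
  exact A.mul_nonsing_inv (hdet ▸ isUnit_one)
end
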